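/- arXiv:1811.09158 — 9 statements merged into one kernel-verified Lean document; each statement's English description precedes it below -/
import Mathlib

section
/- If G is a semi-comparability graph (an ordered graph with no four vertices a<b<c<d with ab, bc, cd edges and ac, bd non-edges) with clique number at most k, then G can be properly colored with at most k(k+1)/2 colors. -/
/-!
Attach to each vertex `v` two numbers: `ℓ(v)`, the largest size of a
clique of vertices `≤ v` containing `v`, and `s(v) ≤ ℓ(v)`, the largest size of such a clique
all of whose members are adjacent to every later neighbour of `v`. Then `1 ≤ s(v) ≤ ℓ(v) ≤ k`,
so there are at most `k(k+1)/2` pairs `(ℓ(v), s(v))`. Along an edge `u < v` with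
`ℓ(v) ≤ ℓ(u)`, some member `b` of a largest left clique at `u` is not adjacent to `v`, and the
forbidden pattern on `b < u < v < d` makes `u` adjacent to every later neighbour `d` of `v`;
hence adding `v` to a largest strong clique at `u` gives `s(u) < s(v)`. So the pair is a proper
colouring.
-/

open Finset

namespace Finset

variable {α : Type*} [Fintype α]

open scoped Classical in
noncomputable def maxCardOf (P : Finset α → Prop) : ℕ :=
  (univ.filter P).sup card

variable {P : Finset α → Prop}

theorem card_le_maxCardOf {s : Finset α} (hs : P s) : #s ≤ maxCardOf P := by
  classical
  exact le_sup (f := card) (mem_filter.2 ⟨mem_univ s, hs⟩)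

theorem exists_card_eq_maxCardOf (h : ∃ s, P s) : ∃ s, P s ∧ #s = maxCardOf P := by
  classical
  obtain ⟨s, hs⟩ := h
  obtain ⟨t, ht, hteq⟩ :=
    exists_mem_eq_sup (univ.filter P) ⟨s, mem_filter.2 ⟨mem_univ s, hs⟩⟩ card
  exact ⟨t, (mem_filter.1 ht).2, hteq.symm⟩

end Finset

namespace SimpleGraph

theorem IsClique.card_le_of_cliqueFree {V : Type*} {G : SimpleGraph V} {k : ℕ}
    {s : Finset V} (hs : G.IsClique (s : Set V)) (hG : G.CliqueFree (k + 1)) : #s ≤ k := by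
  by_contra! h
  obtain ⟨t, hts, htcard⟩ := exists_subset_card_eq (s := s) (n := k + 1) h
  exact hG t ⟨hs.subset (by exact_mod_cast hts), htcard⟩

variable {V : Type*} [LinearOrder V] (G : SimpleGraph V)

def IsSemiComparability : Prop :=
  ∀ a b c d : V, a < b → b < c → c < d →
    G.Adj a b → G.Adj b c → G.Adj c d → ¬ G.Adj a c → ¬ G.Adj b d → False

def IsLeftClique (v : V) (C : Finset V) : Prop :=
  G.IsClique (C : Set V) ∧ v ∈ C ∧ ∀ x ∈ C, x ≤ v

def IsStrongLeftClique (v : V) (C : Finset V) : Prop :=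
  G.IsLeftClique v C ∧ ∀ x ∈ C, ∀ d, v < d → G.Adj v d → G.Adj x d

variable {G}

theorem isLeftClique_singleton (v : V) : G.IsLeftClique v {v} :=
  ⟨by simp, mem_singleton_self v, fun _ hx => (mem_singleton.1 hx).le⟩

theorem isStrongLeftClique_singleton (v : V) : G.IsStrongLeftClique v {v} :=
  ⟨isLeftClique_singleton v, fun _ hx _ _ hvd => mem_singleton.1 hx ▸ hvd⟩

theorem IsLeftClique.notMem_of_lt {u v : V} {C : Finset V} (hC : G.IsLeftClique u C)
    (huv : u < v) : v ∉ C :=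
  fun hv => (hC.2.2 v hv).not_gt huv

theorem IsLeftClique.insert {u v : V} {C : Finset V} (hC : G.IsLeftClique u C) (huv : u < v)
    (hadj : ∀ x ∈ C, G.Adj x v) : G.IsLeftClique v (insert v C) := by
  refine ⟨?_, mem_insert_self v C, ?_⟩
  · rw [coe_insert]
    exact hC.1.insert fun x hx _ => (hadj x hx).symm
  · intro x hx
    rcases mem_insert.1 hx with rfl | hx
    · exact le_rfl
    · exact (hC.2.2 x hx).trans huv.le

theorem IsStrongLeftClique.insert {u v : V} {C : Finset V} (hC : G.IsStrongLeftClique u C)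
    (huv : u < v) (hadj : G.Adj u v) (hfwd : ∀ d, v < d → G.Adj v d → G.Adj u d) :
    G.IsStrongLeftClique v (insert v C) := by
  refine ⟨hC.1.insert huv fun x hx => hC.2 x hx v huv hadj, fun x hx d hvd hadjvd => ?_⟩
  rcases mem_insert.1 hx with rfl | hx
  · exact hadjvd
  · exact hC.2 x hx d (huv.trans hvd) (hfwd d hvd hadjvd)

section Fintype

variable [Fintype V]

variable (G) in
noncomputable def leftCliqueNum (v : V) : ℕ := maxCardOf (G.IsLeftClique v)

variable (G) in
noncomputable def strongLeftCliqueNum (v : V) : ℕ := maxCardOf (G.IsStrongLeftClique v)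

theorem exists_isLeftClique_card_eq (v : V) :
    ∃ C, G.IsLeftClique v C ∧ #C = G.leftCliqueNum v :=
  exists_card_eq_maxCardOf ⟨_, isLeftClique_singleton v⟩

theorem exists_isStrongLeftClique_card_eq (v : V) :
    ∃ C, G.IsStrongLeftClique v C ∧ #C = G.strongLeftCliqueNum v :=
  exists_card_eq_maxCardOf ⟨_, isStrongLeftClique_singleton v⟩

theorem IsLeftClique.card_le_leftCliqueNum {v : V} {C : Finset V} (hC : G.IsLeftClique v C) :
    #C ≤ G.leftCliqueNum v :=
  card_le_maxCardOf hC

theorem IsStrongLeftClique.card_le_strongLeftCliqueNum {v : V} {C : Finset V}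
    (hC : G.IsStrongLeftClique v C) : #C ≤ G.strongLeftCliqueNum v :=
  card_le_maxCardOf hC

theorem one_le_strongLeftCliqueNum (v : V) : 1 ≤ G.strongLeftCliqueNum v :=
  (isStrongLeftClique_singleton v).card_le_strongLeftCliqueNum

theorem strongLeftCliqueNum_le_leftCliqueNum (v : V) :
    G.strongLeftCliqueNum v ≤ G.leftCliqueNum v := by
  obtain ⟨C, hC, hCcard⟩ := exists_isStrongLeftClique_card_eq (G := G) v
  exact hCcard ▸ hC.1.card_le_leftCliqueNum

theorem leftCliqueNum_sub_one_lt {k : ℕ} (hG : G.CliqueFree (k + 1)) (v : V) :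
    G.leftCliqueNum v - 1 < k := by
  obtain ⟨C, hC, hCcard⟩ := exists_isLeftClique_card_eq (G := G) v
  have hpos : 0 < #C := card_pos.2 ⟨v, hC.2.1⟩
  have hle : #C ≤ k := hC.1.card_le_of_cliqueFree hG
  omega

theorem IsSemiComparability.forall_adj_of_leftCliqueNum_le (hG : G.IsSemiComparability)
    {u v : V} (huv : u < v) (hadj : G.Adj u v) (hl : G.leftCliqueNum v ≤ G.leftCliqueNum u) :
    ∀ d, v < d → G.Adj v d → G.Adj u d := by
  obtain ⟨C, hC, hCcard⟩ := exists_isLeftClique_card_eq (G := G) u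
  obtain ⟨b, hbC, hbv⟩ : ∃ b ∈ C, ¬ G.Adj b v := by
    by_contra! hall
    have := (hC.insert huv hall).card_le_leftCliqueNum
    rw [card_insert_of_notMem (hC.notMem_of_lt huv)] at this
    omega
  have hbu : b ≠ u := fun h => hbv (h ▸ hadj)
  have hb_lt : b < u := (hC.2.2 b hbC).lt_of_ne hbu
  have hb_adj : G.Adj b u := hC.1 (mem_coe.2 hbC) (mem_coe.2 hC.2.1) hbu
  intro d hvd hvd'
  by_contra hud
  exact hG b u v d hb_lt huv hvd hb_adj hadj hvd' hbv hud

theorem IsSemiComparability.strongLeftCliqueNum_lt (hG : G.IsSemiComparability)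
    {u v : V} (huv : u < v) (hadj : G.Adj u v) (hl : G.leftCliqueNum v ≤ G.leftCliqueNum u) :
    G.strongLeftCliqueNum u < G.strongLeftCliqueNum v := by
  obtain ⟨C, hC, hCcard⟩ := exists_isStrongLeftClique_card_eq (G := G) u
  have := (hC.insert huv hadj (hG.forall_adj_of_leftCliqueNum_le huv hadj hl)
    ).card_le_strongLeftCliqueNum
  rwa [card_insert_of_notMem (hC.1.notMem_of_lt huv), hCcard] at this

variable (G) in
/-- Since `1 ≤ s(v) ≤ ℓ(v)`, the unordered pair still determines `(ℓ(v), s(v))`. -/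
noncomputable def cliqueNumPair {k : ℕ} (hG : G.CliqueFree (k + 1)) (v : V) : Sym2 (Fin k) :=
  s(⟨G.leftCliqueNum v - 1, leftCliqueNum_sub_one_lt hG v⟩,
    ⟨G.strongLeftCliqueNum v - 1, (Nat.sub_le_sub_right
      (strongLeftCliqueNum_le_leftCliqueNum v) 1).trans_lt (leftCliqueNum_sub_one_lt hG v)⟩)

theorem IsSemiComparability.cliqueNumPair_ne (hG : G.IsSemiComparability) {k : ℕ}
    (hk : G.CliqueFree (k + 1)) {u v : V} (huv : u < v) (hadj : G.Adj u v) :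
    G.cliqueNumPair hk u ≠ G.cliqueNumPair hk v := by
  intro h
  simp only [cliqueNumPair, Sym2.eq_iff, Fin.mk.injEq] at h
  have := one_le_strongLeftCliqueNum (G := G) u
  have := one_le_strongLeftCliqueNum (G := G) v
  have := strongLeftCliqueNum_le_leftCliqueNum (G := G) u
  have := strongLeftCliqueNum_le_leftCliqueNum (G := G) v
  have hl : G.leftCliqueNum v ≤ G.leftCliqueNum u := by omega
  have := hG.strongLeftCliqueNum_lt huv hadj hl
  omega

end Fintype

end SimpleGraph

/-- A semi-comparability graph (an ordered graph with no four vertices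
`a<b<c<d` with `ab, bc, cd` edges and `ac, bd` non-edges) with clique number at most `k`
can be properly colored with at most `k(k+1)/2` colors. -/
theorem semiComparability_colorable {V : Type*} [Fintype V] [LinearOrder V]
    (G : SimpleGraph V) (k : ℕ)
    (hsemi : ∀ a b c d : V, a < b → b < c → c < d →
      G.Adj a b → G.Adj b c → G.Adj c d → ¬ G.Adj a c → ¬ G.Adj b d → False)
    (hclique : G.CliqueFree (k + 1)) :
    G.Colorable (k * (k + 1) / 2) := by
  have hG : G.IsSemiComparability := hsemi
  let C : G.Coloring (Sym2 (Fin k)) := SimpleGraph.Coloring.mk (G.cliqueNumPair hclique)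
    fun {u v} hadj => by
      rcases hadj.ne.lt_or_gt with huv | hvu
      · exact hG.cliqueNumPair_ne hclique huv hadj
      · exact (hG.cliqueNumPair_ne hclique hvu hadj.symm).symm
  have hcard : Fintype.card (Sym2 (Fin k)) = k * (k + 1) / 2 := by
    rw [Sym2.card, Fintype.card_fin, Nat.choose_two_right, Nat.add_sub_cancel, Nat.mul_comm]
  exact hcard ▸ C.colorable
end

section
/- In a double-ordered graph G with orders <₁, <₂ that is magical, the relation ≺ defined by a ≺ b iff a <₁ b, a <₂ b, and ab ∈ E(G) is transitive (hence a strict partial order). -/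
theorem SimpleGraph.adj_of_magical {V : Type*} (G : SimpleGraph V) (lt1 lt2 : V → V → Prop)
    [Std.Asymm lt2]
    (hmag : ∀ a b c : V, lt1 a b → lt1 b c → G.Adj a b → G.Adj b c → ¬ G.Adj a c →
      lt2 b a ∧ lt2 b c)
    {a b c : V} (h1ab : lt1 a b) (h1bc : lt1 b c) (hab : G.Adj a b) (hbc : G.Adj b c)
    (h2ab : lt2 a b) : G.Adj a c := by
  by_contra hac
  exact asymm h2ab (hmag a b c h1ab h1bc hab hbc hac).1

/-- In a magical double-ordered graph, the relation
`a ≺ b ↔ a <₁ b ∧ a <₂ b ∧ ab ∈ E(G)` is transitive. -/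
theorem magical_prec_transitive {V : Type*} (G : SimpleGraph V)
    (lt1 lt2 : V → V → Prop)
    [IsStrictTotalOrder V lt1] [IsStrictTotalOrder V lt2]
    (hmag : ∀ a b c : V, lt1 a b → lt1 b c → G.Adj a b → G.Adj b c → ¬ G.Adj a c →
      lt2 b a ∧ lt2 b c) :
    ∀ a b c : V, (lt1 a b ∧ lt2 a b ∧ G.Adj a b) → (lt1 b c ∧ lt2 b c ∧ G.Adj b c) →
      lt1 a c ∧ lt2 a c ∧ G.Adj a c := by
  rintro a b c ⟨h1ab, h2ab, hab⟩ ⟨h1bc, h2bc, hbc⟩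
  exact ⟨trans_of lt1 h1ab h1bc, trans_of lt2 h2ab h2bc,
    G.adj_of_magical lt1 lt2 hmag h1ab h1bc hab hbc h2ab⟩
end

section
/- If G is a magical double-ordered graph with clique number at most k, then χ(G) ≤ k(k+1)/2. -/
open Finset

section MagicalAux

variable {V : Type*} [Fintype V] (G : SimpleGraph V) (lt1 lt2 : V → V → Prop)

open scoped Classical in
/-- Cliques containing `v` with `v` as `lt1`-minimum. -/
noncomputable def mcliqs1 (v : V) : Finset (Finset V) :=
  Finset.univ.powerset.filter
    (fun s => G.IsClique (s : Set V) ∧ v ∈ s ∧ ∀ x ∈ s, x ≠ v → lt1 v x)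

open scoped Classical in
/-- Cliques containing `v` with `v` as `lt1`-minimum and `lt2`-maximum. -/
noncomputable def mcliqs2 (v : V) : Finset (Finset V) :=
  Finset.univ.powerset.filter
    (fun s => G.IsClique (s : Set V) ∧ v ∈ s ∧ (∀ x ∈ s, x ≠ v → lt1 v x) ∧
      ∀ x ∈ s, x ≠ v → lt2 x v)

noncomputable def mp (v : V) : ℕ := (mcliqs1 G lt1 v).sup Finset.card

noncomputable def mq (v : V) : ℕ := (mcliqs2 G lt1 lt2 v).sup Finset.card

lemma mem_mcliqs1 {v : V} {s : Finset V} :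
    s ∈ mcliqs1 G lt1 v ↔ G.IsClique (s : Set V) ∧ v ∈ s ∧ ∀ x ∈ s, x ≠ v → lt1 v x := by
  classical
  simp [mcliqs1]

lemma mem_mcliqs2 {v : V} {s : Finset V} :
    s ∈ mcliqs2 G lt1 lt2 v ↔ G.IsClique (s : Set V) ∧ v ∈ s ∧
      (∀ x ∈ s, x ≠ v → lt1 v x) ∧ ∀ x ∈ s, x ≠ v → lt2 x v := by
  classical
  simp [mcliqs2]

lemma singleton_mem_mcliqs1 (v : V) : {v} ∈ mcliqs1 G lt1 v := by
  rw [mem_mcliqs1]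
  refine ⟨by simp, by simp, ?_⟩
  intro x hx hne
  simp only [Finset.mem_singleton] at hx
  exact absurd hx hne

lemma singleton_mem_mcliqs2 (v : V) : {v} ∈ mcliqs2 G lt1 lt2 v := by
  rw [mem_mcliqs2]
  refine ⟨by simp, by simp, ?_, ?_⟩ <;>
  · intro x hx hne
    simp only [Finset.mem_singleton] at hx
    exact absurd hx hne

lemma one_le_mp (v : V) : 1 ≤ mp G lt1 v := by
  have := Finset.le_sup (f := Finset.card) (singleton_mem_mcliqs1 G lt1 v)
  simp only [Finset.card_singleton] at this
  exact this

lemma one_le_mq (v : V) : 1 ≤ mq G lt1 lt2 v := by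
  have := Finset.le_sup (f := Finset.card) (singleton_mem_mcliqs2 G lt1 lt2 v)
  simp only [Finset.card_singleton] at this
  exact this

lemma card_le_of_clique {k : ℕ} (hclique : G.CliqueFree (k + 1)) {s : Finset V}
    (hs : G.IsClique (s : Set V)) : s.card ≤ k := by
  by_contra h
  push_neg at h
  obtain ⟨t, hts, htc⟩ := Finset.exists_subset_card_eq (s := s) (n := k + 1) h
  exact hclique t ⟨hs.subset hts, htc⟩

lemma mp_le {k : ℕ} (hclique : G.CliqueFree (k + 1)) (v : V) : mp G lt1 v ≤ k := by
  apply Finset.sup_le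
  intro s hs
  exact card_le_of_clique G hclique ((mem_mcliqs1 G lt1).1 hs).1

lemma mq_le_mp (v : V) : mq G lt1 lt2 v ≤ mp G lt1 v := by
  apply Finset.sup_le
  intro s hs
  rw [mem_mcliqs2] at hs
  exact Finset.le_sup (f := Finset.card) ((mem_mcliqs1 G lt1).2 ⟨hs.1, hs.2.1, hs.2.2.1⟩)

lemma magical_main [IsStrictTotalOrder V lt1] [IsStrictTotalOrder V lt2]
    (hmag : ∀ a b c : V, lt1 a b → lt1 b c → G.Adj a b → G.Adj b c → ¬ G.Adj a c →
      lt2 b a ∧ lt2 b c)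
    {u v : V} (hadj : G.Adj u v) (h1 : lt1 u v)
    (hpe : mp G lt1 u = mp G lt1 v) (hqe : mq G lt1 lt2 u = mq G lt1 lt2 v) : False := by
  classical
  have asym1 : ∀ a b : V, lt1 a b → lt1 b a → False := fun a b h h' =>
    irrefl_of lt1 a (Trans.trans h h')
  have asym2 : ∀ a b : V, lt2 a b → lt2 b a → False := fun a b h h' =>
    irrefl_of lt2 a (Trans.trans h h')
  -- witness for `mp v`
  obtain ⟨K, hKmem, hKcard⟩ := Finset.exists_mem_eq_sup (mcliqs1 G lt1 v)
    ⟨{v}, singleton_mem_mcliqs1 G lt1 v⟩ Finset.card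
  rw [mem_mcliqs1] at hKmem
  obtain ⟨hKcl, hvK, hKmin⟩ := hKmem
  have huK : u ∉ K := by
    intro hu
    exact asym1 u v h1 (hKmin u hu (G.ne_of_adj hadj))
  -- Step 1: establish `lt2 v u`
  have h2vu : lt2 v u := by
    by_cases hall : ∀ x ∈ K, x ≠ u → G.Adj u x
    · -- extend K by u, contradicting `mp u = mp v`
      have hcl : G.IsClique ((insert u K : Finset V) : Set V) := by
        rw [Finset.coe_insert]
        exact hKcl.insert (fun b hb hne => hall b hb (Ne.symm hne))
      have hmem : insert u K ∈ mcliqs1 G lt1 u := by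
        rw [mem_mcliqs1]
        refine ⟨hcl, Finset.mem_insert_self _ _, ?_⟩
        intro x hx hne
        rcases Finset.mem_insert.1 hx with h | h
        · exact absurd h hne
        · by_cases hxv : x = v
          · exact hxv ▸ h1
          · exact Trans.trans h1 (hKmin x h hxv)
      have := Finset.le_sup (f := Finset.card) hmem
      rw [Finset.card_insert_of_notMem huK] at this
      have hle : mp G lt1 u ≤ K.card := le_of_eq (hpe.trans hKcard)
      have hmp : mp G lt1 u = (mcliqs1 G lt1 u).sup Finset.card := rfl
      omega
    · push_neg at hall
      obtain ⟨x, hxK, hxu, hnadj⟩ := hall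
      have hxv : x ≠ v := by rintro rfl; exact hnadj hadj
      have hvx : lt1 v x := hKmin x hxK hxv
      have hadjvx : G.Adj v x := hKcl hvK (by simpa using hxK) (Ne.symm hxv)
      exact (hmag u v x h1 hvx hadj hadjvx hnadj).1
  -- Step 2: witness for `mq v`
  obtain ⟨L, hLmem, hLcard⟩ := Finset.exists_mem_eq_sup (mcliqs2 G lt1 lt2 v)
    ⟨{v}, singleton_mem_mcliqs2 G lt1 lt2 v⟩ Finset.card
  rw [mem_mcliqs2] at hLmem
  obtain ⟨hLcl, hvL, hLmin, hLmax⟩ := hLmem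
  have huL : u ∉ L := by
    intro hu
    exact asym1 u v h1 (hLmin u hu (G.ne_of_adj hadj))
  have hall : ∀ y ∈ L, y ≠ u → G.Adj u y := by
    intro y hy _
    by_cases hyv : y = v
    · exact hyv ▸ hadj
    · by_contra hnadj
      have hvy : lt1 v y := hLmin y hy hyv
      have hadjvy : G.Adj v y := hLcl hvL (by simpa using hy) (Ne.symm hyv)
      exact asym2 v y (hmag u v y h1 hvy hadj hadjvy hnadj).2 (hLmax y hy hyv)
  have hcl : G.IsClique ((insert u L : Finset V) : Set V) := by
    rw [Finset.coe_insert]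
    exact hLcl.insert (fun b hb hne => hall b hb (Ne.symm hne))
  have hmem : insert u L ∈ mcliqs2 G lt1 lt2 u := by
    rw [mem_mcliqs2]
    refine ⟨hcl, Finset.mem_insert_self _ _, ?_, ?_⟩
    · intro x hx hne
      rcases Finset.mem_insert.1 hx with h | h
      · exact absurd h hne
      · by_cases hxv : x = v
        · exact hxv ▸ h1
        · exact Trans.trans h1 (hLmin x h hxv)
    · intro x hx hne
      rcases Finset.mem_insert.1 hx with h | h
      · exact absurd h hne
      · by_cases hxv : x = v
        · exact hxv ▸ h2vu
        · exact Trans.trans (hLmax x h hxv) h2vu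
  have := Finset.le_sup (f := Finset.card) hmem
  rw [Finset.card_insert_of_notMem huL] at this
  have hle : mq G lt1 lt2 u ≤ L.card := le_of_eq (hqe.trans hLcard)
  have hmq : mq G lt1 lt2 u = (mcliqs2 G lt1 lt2 u).sup Finset.card := rfl
  omega

end MagicalAux

/-- A magical double-ordered graph with clique number at most `k`
has chromatic number at most `k(k+1)/2`. -/
theorem magical_colorable {V : Type*} [Fintype V] (G : SimpleGraph V)
    (lt1 lt2 : V → V → Prop)
    [IsStrictTotalOrder V lt1] [IsStrictTotalOrder V lt2]
    (hmag : ∀ a b c : V, lt1 a b → lt1 b c → G.Adj a b → G.Adj b c → ¬ G.Adj a c →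
      lt2 b a ∧ lt2 b c)
    (k : ℕ) (hclique : G.CliqueFree (k + 1)) :
    G.Colorable (k * (k + 1) / 2) := by
  classical
  have hp1 : ∀ v, 1 ≤ mp G lt1 v := one_le_mp G lt1
  have hpk : ∀ v, mp G lt1 v ≤ k := mp_le G lt1 hclique
  have hq1 : ∀ v, 1 ≤ mq G lt1 lt2 v := one_le_mq G lt1 lt2
  have hqp : ∀ v, mq G lt1 lt2 v ≤ mp G lt1 v := mq_le_mp G lt1 lt2
  let C : G.Coloring (Σ i : Fin k, Fin (i + 1)) := by
    refine SimpleGraph.Coloring.mk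
      (fun v => ⟨⟨mp G lt1 v - 1, by have := hp1 v; have := hpk v; omega⟩,
        ⟨mq G lt1 lt2 v - 1, by change mq G lt1 lt2 v - 1 < mp G lt1 v - 1 + 1; have := hq1 v; have := hqp v; have := hp1 v; omega⟩⟩) ?_
    intro u v hadj heq
    obtain ⟨hfst, hsnd⟩ := Sigma.ext_iff.1 heq
    have hfst' : mp G lt1 u - 1 = mp G lt1 v - 1 := congrArg Fin.val hfst
    have hpuv : mp G lt1 u = mp G lt1 v := by
      have := hp1 u; have := hp1 v; omega
    have hquv : mq G lt1 lt2 u = mq G lt1 lt2 v := by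
      have hsnd' : mq G lt1 lt2 u - 1 = mq G lt1 lt2 v - 1 :=
        (Fin.heq_ext_iff (show mp G lt1 u - 1 + 1 = mp G lt1 v - 1 + 1 by omega)).1 hsnd
      have := hq1 u; have := hq1 v
      omega
    rcases trichotomous_of lt1 u v with h | h | h
    · exact magical_main G lt1 lt2 hmag hadj h hpuv hquv
    · exact G.ne_of_adj hadj h
    · exact magical_main G lt1 lt2 hmag (G.adj_symm hadj) h hpuv.symm hquv.symm
  have hcard : Fintype.card (Σ i : Fin k, Fin (i + 1)) = k * (k + 1) / 2 := by
    rw [Fintype.card_sigma]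
    simp only [Fintype.card_fin]
    rw [Fin.sum_univ_eq_sum_range (fun i => i + 1) k]
    have : ∑ i ∈ Finset.range k, (i + 1) = ∑ i ∈ Finset.range (k + 1), i := by
      rw [Finset.sum_range_succ' (fun i => i) k]
      simp
    rw [this, Finset.sum_range_id]
    simp [Nat.mul_comm]
  exact hcard ▸ C.colorable
end

section
/- Let G be a double-ordered graph with orders <₁, <₂. Define G' on the same vertex set by joining u and v iff there is a mountain-path from u to v in G. Then G' is a magical double-ordered graph, E(G) ⊆ E(G'), and G' is contained in every magical double-ordered graph on V(G) (with the same orders) that contains all edges of G; i.e., G' is the unique minimal magical graph containing G. -/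
/-- A sequence `x 0 <₁ x 1 <₁ … <₁ x (r+1)` of consecutive-adjacent vertices from `u`
to `v` such that all interior vertices are `<₂`-above `u`, or all are `<₂`-above `v`. -/
def IsMountainPath {V : Type*} (G : SimpleGraph V) (lt1 lt2 : V → V → Prop)
    (u v : V) : Prop :=
  ∃ (r : ℕ) (x : Fin (r + 2) → V), x 0 = u ∧ x (Fin.last (r + 1)) = v ∧
    (∀ i : Fin (r + 1), lt1 (x i.castSucc) (x i.succ)) ∧
    (∀ i : Fin (r + 1), G.Adj (x i.castSucc) (x i.succ)) ∧
    ((∀ i : Fin (r + 2), i ≠ 0 → i ≠ Fin.last (r + 1) → lt2 u (x i)) ∨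
     (∀ i : Fin (r + 2), i ≠ 0 → i ≠ Fin.last (r + 1) → lt2 v (x i)))

/-- A double-ordered graph is magical if whenever `a <₁ b <₁ c`, `ab, bc` are edges and
`ac` is not, then `b <₂ a` and `b <₂ c`. -/
def IsMagical {V : Type*} (G : SimpleGraph V) (lt1 lt2 : V → V → Prop) : Prop :=
  ∀ a b c : V, lt1 a b → lt1 b c → G.Adj a b → G.Adj b c → ¬ G.Adj a c →
    lt2 b a ∧ lt2 b c

/-- ℕ-indexed reformulation of mountain paths, easier to manipulate. -/
def MPaux {V : Type*} (G : SimpleGraph V) (lt1 lt2 : V → V → Prop) (u v : V) : Prop :=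
  ∃ (r : ℕ) (x : ℕ → V), x 0 = u ∧ x (r + 1) = v ∧
    (∀ i, i ≤ r → lt1 (x i) (x (i + 1))) ∧
    (∀ i, i ≤ r → G.Adj (x i) (x (i + 1))) ∧
    ((∀ i, 0 < i → i < r + 1 → lt2 u (x i)) ∨
     (∀ i, 0 < i → i < r + 1 → lt2 v (x i)))

lemma mp_iff {V : Type*} (G : SimpleGraph V) (lt1 lt2 : V → V → Prop) (u v : V) :
    IsMountainPath G lt1 lt2 u v ↔ MPaux G lt1 lt2 u v := by
  constructor
  · rintro ⟨r, x, h0, hl, h1, h2, h3⟩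
    refine ⟨r, fun i => if h : i < r + 2 then x ⟨i, h⟩ else v, ?_, ?_, ?_, ?_, ?_⟩
    · simp only [dif_pos (show 0 < r + 2 by omega)]
      rw [show (⟨0, show 0 < r + 2 by omega⟩ : Fin (r + 2)) = 0 from by ext; simp, h0]
    · simp only [dif_pos (show r + 1 < r + 2 by omega)]
      rw [← hl]; congr 1
    · intro i hi
      simp only [dif_pos (show i < r + 2 by omega), dif_pos (show i + 1 < r + 2 by omega)]
      have := h1 ⟨i, by omega⟩
      simpa [Fin.castSucc, Fin.succ] using this
    · intro i hi
      simp only [dif_pos (show i < r + 2 by omega), dif_pos (show i + 1 < r + 2 by omega)]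
      have := h2 ⟨i, by omega⟩
      simpa [Fin.castSucc, Fin.succ] using this
    · refine h3.imp ?_ ?_ <;>
      · intro h i hi0 hir
        simp only [dif_pos (show i < r + 2 by omega)]
        apply h ⟨i, by omega⟩
        · simp [Fin.ext_iff]; omega
        · simp [Fin.ext_iff, Fin.last]; omega
  · rintro ⟨r, x, h0, hl, h1, h2, h3⟩
    refine ⟨r, fun i => x i.val, ?_, ?_, ?_, ?_, ?_⟩
    · simpa using h0
    · simpa [Fin.last] using hl
    · intro i; simpa using h1 i.val (by omega)
    · intro i; simpa using h2 i.val (by omega)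
    · refine h3.imp ?_ ?_ <;>
      · intro h i hi0 hir
        apply h i.val
        · have : i.val ≠ 0 := fun h => hi0 (Fin.ext (by rw [h, Fin.val_zero])); omega
        · simp [Fin.ext_iff, Fin.last] at hir; omega

section Aux

variable {V : Type*} {G : SimpleGraph V} {lt1 lt2 : V → V → Prop}

lemma mp_lt1 [IsTrans V lt1] {u v : V} (h : MPaux G lt1 lt2 u v) : lt1 u v := by
  obtain ⟨r, x, h0, hl, h1, -, -⟩ := h
  have key : ∀ i, i ≤ r → lt1 (x 0) (x (i + 1)) := by
    intro i hi
    induction i with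
    | zero => exact h1 0 (by omega)
    | succ n ih => exact trans_of lt1 (ih (by omega)) (h1 (n + 1) hi)
  rw [← h0, ← hl]; exact key r le_rfl

lemma mp_single {u v : V} (huv : G.Adj u v) (h1 : lt1 u v) : MPaux G lt1 lt2 u v := by
  refine ⟨0, fun i => if i = 0 then u else v, by simp, by simp, ?_, ?_, ?_⟩
  · intro i hi; interval_cases i; simpa using h1
  · intro i hi; interval_cases i; simpa using huv
  · left; intro i hi0 hir; omega

/-- Key induction: in a magical graph, the endpoints of any "mountain chain" are adjacent. -/
lemma chain_adj [IsTrans V lt1] [IsTrans V lt2] [IsIrrefl V lt2]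
    (H : SimpleGraph V) (hH : IsMagical H lt1 lt2) :
    ∀ (r : ℕ) (x : ℕ → V),
      (∀ i, i ≤ r → lt1 (x i) (x (i + 1))) →
      (∀ i, i ≤ r → H.Adj (x i) (x (i + 1))) →
      ((∀ i, 0 < i → i < r + 1 → lt2 (x 0) (x i)) ∨
       (∀ i, 0 < i → i < r + 1 → lt2 (x (r + 1)) (x i))) →
      H.Adj (x 0) (x (r + 1)) := by
  intro r
  induction r with
  | zero => intro x h1 h2 _; exact h2 0 le_rfl
  | succ r ih =>
    intro x h1 h2 h3
    rcases h3 with h3 | h3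
    · -- all interior vertices are `<₂`-above the start: remove `x 1`
      have hb : lt2 (x 0) (x 1) := h3 1 one_pos (by omega)
      have hac : H.Adj (x 0) (x 2) := by
        by_contra hn
        have := (hH (x 0) (x 1) (x 2) (h1 0 (by omega)) (h1 1 (by omega))
          (h2 0 (by omega)) (h2 1 (by omega)) hn).1
        exact irrefl_of lt2 (x 0) (trans_of lt2 hb this)
      have key := ih (fun i => if i = 0 then x 0 else x (i + 1)) ?_ ?_ ?_
      · simpa using key
      · intro i hi
        by_cases hi0 : i = 0
        · subst hi0
          simpa using trans_of lt1 (h1 0 (by omega)) (h1 1 (by omega))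
        · simp only [if_neg hi0, if_neg (show i + 1 ≠ 0 by omega)]
          exact h1 (i + 1) (by omega)
      · intro i hi
        by_cases hi0 : i = 0
        · subst hi0; simpa using hac
        · simp only [if_neg hi0, if_neg (show i + 1 ≠ 0 by omega)]
          exact h2 (i + 1) (by omega)
      · left
        intro i hi0 hir
        simp only [if_neg (show i ≠ 0 by omega)]
        simpa using h3 (i + 1) (by omega) (by omega)
    · -- all interior vertices are `<₂`-above the end: remove `x (r+1)`
      have hb : lt2 (x (r + 2)) (x (r + 1)) := h3 (r + 1) (by omega) (by omega)
      have hac : H.Adj (x r) (x (r + 2)) := by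
        by_contra hn
        have := (hH (x r) (x (r + 1)) (x (r + 2)) (h1 r (by omega)) (h1 (r + 1) (by omega))
          (h2 r (by omega)) (h2 (r + 1) (by omega)) hn).2
        exact irrefl_of lt2 (x (r + 2)) (trans_of lt2 hb this)
      have key := ih (fun i => if i ≤ r then x i else x (i + 1)) ?_ ?_ ?_
      · simpa [show ¬ (r + 1 ≤ r) by omega] using key
      · intro i hi
        by_cases hir : i = r
        · rw [hir]
          simp only [if_pos le_rfl, if_neg (show ¬ (r + 1 ≤ r) by omega)]
          exact trans_of lt1 (h1 r (by omega)) (h1 (r + 1) (by omega))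
        · simp only [if_pos (show i ≤ r by omega), if_pos (show i + 1 ≤ r by omega)]
          exact h1 i (by omega)
      · intro i hi
        by_cases hir : i = r
        · rw [hir]
          simp only [if_pos le_rfl, if_neg (show ¬ (r + 1 ≤ r) by omega)]
          exact hac
        · simp only [if_pos (show i ≤ r by omega), if_pos (show i + 1 ≤ r by omega)]
          exact h2 i (by omega)
      · right
        intro i hi0 hir
        simp only [if_pos (show i ≤ r by omega), if_neg (show ¬ (r + 1 ≤ r) by omega)]
        exact h3 i hi0 (by omega)

/-- Concatenation of mountain paths through `b`, when `b` is `<₂`-above one endpoint. -/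
lemma mp_concat [IsTrans V lt1] [IsTrans V lt2] [IsTrichotomous V lt2]
    {a b c : V} (hab : MPaux G lt1 lt2 a b) (hbc : MPaux G lt1 lt2 b c)
    (hne : a ≠ c) (hb : lt2 a b ∨ lt2 c b) :
    MPaux G lt1 lt2 a c := by
  obtain ⟨r1, x, hx0, hxl, hx1, hx2, hx3⟩ := hab
  obtain ⟨r2, y, hy0, hyl, hy1, hy2, hy3⟩ := hbc
  set z : ℕ → V := fun i => if i ≤ r1 + 1 then x i else y (i - (r1 + 1)) with hz
  have hz_left : ∀ i, i ≤ r1 + 1 → z i = x i := fun i hi => if_pos hi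
  have hz_right : ∀ j, z (r1 + 1 + j) = y j := by
    intro j
    cases j with
    | zero => simpa [hz] using hxl.trans hy0.symm
    | succ n =>
      simp only [hz, if_neg (show ¬ (r1 + 1 + (n + 1) ≤ r1 + 1) by omega)]
      congr 1; omega
  -- every interior vertex of the concatenation is `<₂`-above `a` or above `c`
  have hint : ∀ i, 0 < i → i < r1 + r2 + 2 → lt2 a (z i) ∨ lt2 c (z i) := by
    intro i hi0 hir
    rcases Nat.lt_or_ge i (r1 + 1) with hi | hi
    · -- interior vertex of the first path
      rw [hz_left i (by omega)]
      rcases hx3 with h | h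
      · left; exact h i hi0 hi
      · have hx : lt2 b (x i) := h i hi0 hi
        rcases hb with hb | hb
        · exact Or.inl (trans_of lt2 hb hx)
        · exact Or.inr (trans_of lt2 hb hx)
    · rcases Nat.eq_or_lt_of_le hi with hi | hi
      · -- the vertex `b` itself
        rw [← hi, hz_left _ le_rfl, hxl]
        exact hb
      · -- interior vertex of the second path
        obtain ⟨j, rfl⟩ : ∃ j, i = r1 + 1 + j := ⟨i - (r1 + 1), by omega⟩
        rw [hz_right j]
        rcases hy3 with h | h
        · have hy : lt2 b (y j) := h j (by omega) (by omega)
          rcases hb with hb | hb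
          · exact Or.inl (trans_of lt2 hb hy)
          · exact Or.inr (trans_of lt2 hb hy)
        · right; exact h j (by omega) (by omega)
  refine ⟨r1 + r2 + 1, z, ?_, ?_, ?_, ?_, ?_⟩
  · rw [hz_left 0 (by omega)]; exact hx0
  · have := hz_right (r2 + 1)
    rw [show r1 + 1 + (r2 + 1) = r1 + r2 + 1 + 1 by omega] at this
    rw [this]; exact hyl
  · intro i hi
    rcases Nat.lt_or_ge i (r1 + 1) with h | h
    · rw [hz_left i (by omega), hz_left (i + 1) (by omega)]
      exact hx1 i (by omega)
    · obtain ⟨j, rfl⟩ : ∃ j, i = r1 + 1 + j := ⟨i - (r1 + 1), by omega⟩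
      rw [hz_right j, show r1 + 1 + j + 1 = r1 + 1 + (j + 1) by omega, hz_right (j + 1)]
      exact hy1 j (by omega)
  · intro i hi
    rcases Nat.lt_or_ge i (r1 + 1) with h | h
    · rw [hz_left i (by omega), hz_left (i + 1) (by omega)]
      exact hx2 i (by omega)
    · obtain ⟨j, rfl⟩ : ∃ j, i = r1 + 1 + j := ⟨i - (r1 + 1), by omega⟩
      rw [hz_right j, show r1 + 1 + j + 1 = r1 + 1 + (j + 1) by omega, hz_right (j + 1)]
      exact hy2 j (by omega)
  · rcases trichotomous_of lt2 a c with hac | hac | hac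
    · left
      intro i hi0 hir
      rcases hint i hi0 hir with h | h
      · exact h
      · exact trans_of lt2 hac h
    · exact absurd hac hne
    · right
      intro i hi0 hir
      rcases hint i hi0 hir with h | h
      · exact trans_of lt2 hac h
      · exact h

end Aux

/-- Joining `u, v` iff there is a mountain-path between them yields the
unique minimal magical double-ordered graph containing `G`. -/
theorem mountainPath_closure_is_minimal_magical {V : Type*}
    (G G' : SimpleGraph V) (lt1 lt2 : V → V → Prop)
    [IsStrictTotalOrder V lt1] [IsStrictTotalOrder V lt2]
    (hG' : ∀ u v : V, G'.Adj u v ↔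
      (IsMountainPath G lt1 lt2 u v ∨ IsMountainPath G lt1 lt2 v u)) :
    IsMagical G' lt1 lt2 ∧ G ≤ G' ∧
      ∀ H : SimpleGraph V, IsMagical H lt1 lt2 → G ≤ H → G' ≤ H := by
  have hG'' : ∀ u v : V, G'.Adj u v ↔
      (MPaux G lt1 lt2 u v ∨ MPaux G lt1 lt2 v u) := by
    intro u v
    rw [hG', mp_iff, mp_iff]
  refine ⟨?_, ?_, ?_⟩
  · -- G' is magical
    intro a b c hab1 hbc1 hab hbc hnac
    by_contra hcon
    rw [not_and_or] at hcon
    have hne_ab : a ≠ b := fun h => irrefl_of lt1 a (h ▸ hab1)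
    have hne_bc : b ≠ c := fun h => irrefl_of lt1 b (h ▸ hbc1)
    have hne_ac : a ≠ c := fun h =>
      irrefl_of lt1 a (h ▸ trans_of lt1 hab1 hbc1)
    have hb : lt2 a b ∨ lt2 c b := by
      rcases hcon with h | h
      · rcases trichotomous_of lt2 a b with h' | h' | h'
        · exact Or.inl h'
        · exact absurd h' hne_ab
        · exact absurd h' h
      · rcases trichotomous_of lt2 c b with h' | h' | h'
        · exact Or.inr h'
        · exact absurd h'.symm hne_bc
        · exact absurd h' h
    have hmab : MPaux G lt1 lt2 a b := by
      rcases (hG'' a b).mp hab with h | h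
      · exact h
      · exact absurd (mp_lt1 h) (fun h' => irrefl_of lt1 a (trans_of lt1 hab1 h'))
    have hmbc : MPaux G lt1 lt2 b c := by
      rcases (hG'' b c).mp hbc with h | h
      · exact h
      · exact absurd (mp_lt1 h) (fun h' => irrefl_of lt1 b (trans_of lt1 hbc1 h'))
    exact hnac ((hG'' a c).mpr (Or.inl (mp_concat hmab hmbc hne_ac hb)))
  · -- G ≤ G'
    intro u v huv
    rw [hG'' u v]
    rcases trichotomous_of lt1 u v with h | h | h
    · exact Or.inl (mp_single huv h)
    · exact absurd h huv.ne
    · exact Or.inr (mp_single huv.symm h)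
  · -- minimality
    intro H hH hGH u v huv
    rcases (hG'' u v).mp huv with h | h
    · obtain ⟨r, x, h0, hl, h1, h2, h3⟩ := h
      rw [← h0, ← hl] at h3 ⊢
      exact chain_adj H hH r x h1 (fun i hi => hGH (h2 i hi)) h3
    · obtain ⟨r, x, h0, hl, h1, h2, h3⟩ := h
      rw [← h0, ← hl] at h3
      have := chain_adj H hH r x h1 (fun i hi => hGH (h2 i hi)) h3
      rw [h0, hl] at this
      exact this.symm
end

section
/- Let S = {(a,b) ∈ [k]² : a + b ≥ k+1}. If K ⊆ S contains no three points (a₁,b₁), (a₂,b₂), (a₃,b₃) with a₁ < a₂ ≤ a₃, b₂ ≤ b₁, and b₂ < b₃, then |K| ≤ k. -/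
/-- If `K ⊆ S = {(a,b) ∈ [k]² : a+b ≥ k+1}` contains no bad triple
`(a₁,b₁), (a₂,b₂), (a₃,b₃)` with `a₁ < a₂ ≤ a₃`, `b₂ ≤ b₁`, `b₂ < b₃`,
then `|K| ≤ k`. -/
theorem staircase_no_bad_triple_card_le (k : ℕ) (K : Finset (ℕ × ℕ))
    (hKS : ∀ p ∈ K, 1 ≤ p.1 ∧ p.1 ≤ k ∧ 1 ≤ p.2 ∧ p.2 ≤ k ∧ k + 1 ≤ p.1 + p.2)
    (hbad : ∀ p ∈ K, ∀ q ∈ K, ∀ r ∈ K,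
      p.1 < q.1 → q.1 ≤ r.1 → q.2 ≤ p.2 → q.2 < r.2 → False) :
    K.card ≤ k := by
  classical
  set D : ℕ × ℕ → Prop := fun p => ∃ r ∈ K, r.1 < p.1 ∧ p.2 ≤ r.2 with hDdef
  -- helper for the mixed case
  have mixed : ∀ p ∈ K, ∀ q ∈ K, D p → ¬ D q → k + 1 - p.1 = q.2 → False := by
    intro p hp q hq hdp hdq heq
    obtain ⟨hp1, hp2, hp3, hp4, hp5⟩ := hKS p hp
    obtain ⟨hq1, hq2, hq3, hq4, hq5⟩ := hKS q hq
    have hsum : q.2 + p.1 = k + 1 := by omega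
    rcases lt_trichotomy q.1 p.1 with h | h | h
    · -- staircase forces q.1 ≥ p.1
      omega
    · -- same column: witness for p also witnesses q
      obtain ⟨r, hrK, hr1, hr2⟩ := hdp
      exact hdq ⟨r, hrK, by omega, by omega⟩
    · -- p is to the left of q and weakly above: p witnesses D q
      exact hdq ⟨p, hp, h, by omega⟩
  have key : K.card ≤ (Finset.Icc 1 k).card := by
    apply Finset.card_le_card_of_injOn (fun p => if D p then k + 1 - p.1 else p.2)
    · intro p hp
      obtain ⟨h1, h2, h3, h4, h5⟩ := hKS p hp
      by_cases hd : D p <;> simp only [hd, if_true, if_false, Finset.mem_coe, Finset.mem_Icc] <;> omega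
    · intro p hp q hq hfq
      simp only [Finset.mem_coe] at hp hq
      obtain ⟨hp1, hp2, hp3, hp4, hp5⟩ := hKS p hp
      obtain ⟨hq1, hq2, hq3, hq4, hq5⟩ := hKS q hq
      by_cases hdp : D p <;> by_cases hdq : D q <;>
        simp only [hdp, hdq, if_true, if_false] at hfq
      · -- both descent points: same column, then same b
        have hcol : p.1 = q.1 := by omega
        rcases lt_trichotomy p.2 q.2 with h | h | h
        · obtain ⟨r, hrK, hr1, hr2⟩ := hdq
          exact absurd (hbad r hrK p hp q hq (by omega) (by omega) (by omega) h) (fun x => x)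
        · exact Prod.ext hcol h
        · obtain ⟨r, hrK, hr1, hr2⟩ := hdp
          exact absurd (hbad r hrK q hq p hp (by omega) (by omega) (by omega) h) (fun x => x)
      · exact absurd (mixed p hp q hq hdp hdq hfq) (fun x => x)
      · exact absurd (mixed q hq p hp hdq hdp hfq.symm) (fun x => x)
      · -- both non-descent: same b, then same column
        rcases lt_trichotomy p.1 q.1 with h | h | h
        · exact absurd (hdq ⟨p, hp, h, by omega⟩) (fun x => x)
        · exact Prod.ext h hfq
        · exact absurd (hdp ⟨q, hq, h, by omega⟩) (fun x => x)
  simpa using key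
end

section
/- For every integer k ≥ 2 there exists a magical double-ordered graph G with clique number exactly k and chromatic number exactly k(k+1)/2. -/
namespace MagicalAux

open Finset

/-- Triangular numbers. -/
def T : ℕ → ℕ
  | 0 => 0
  | n + 1 => T n + (n + 1)

lemma two_mul_T (k : ℕ) : 2 * T k = k * (k + 1) := by
  induction k with
  | zero => rfl
  | succ n ih =>
    show 2 * (T n + (n + 1)) = (n + 1) * (n + 2)
    nlinarith [ih]

lemma T_eq (k : ℕ) : T k = k * (k + 1) / 2 := by
  have h := two_mul_T k
  omega

lemma T_pos {k : ℕ} (hk : 1 ≤ k) : 1 ≤ T k := by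
  have h := two_mul_T k
  nlinarith

lemma T_le_succ (k : ℕ) : T k ≤ T (k + 1) := by
  show T k ≤ T k + (k + 1); omega

lemma T_succ (k : ℕ) : T (k + 1) = T k + (k + 1) := rfl

/-- Positional-arithmetic injectivity helper. -/
lemma block_inj {B a a' x x' : ℕ} (hx : x < B) (hx' : x' < B)
    (h : a * B + x = a' * B + x') : a = a' ∧ x = x' := by
  rcases Nat.lt_trichotomy a a' with hl | he | hl
  · exfalso
    have h1 : a * B + x < (a + 1) * B := by
      have : (a + 1) * B = a * B + B := by ring
      omega
    have h2 : (a + 1) * B ≤ a' * B := Nat.mul_le_mul_right _ (by omega)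
    have h3 : a' * B ≤ a' * B + x' := Nat.le_add_right _ _
    omega
  · constructor
    · exact he
    · subst he; omega
  · exfalso
    have h1 : a' * B + x' < (a' + 1) * B := by
      have : (a' + 1) * B = a' * B + B := by ring
      omega
    have h2 : (a' + 1) * B ≤ a * B := Nat.mul_le_mul_right _ (by omega)
    have h3 : a * B ≤ a * B + x := Nat.le_add_right _ _
    omega

/-- Bundle carrying a finite double-ordered graph (orders encoded by rank functions). -/
structure Bdl : Type 1 where
  V : Type
  [fV : Fintype V]
  G : SimpleGraph V
  r1 : V → ℕ
  r2 : V → ℕ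
  n1 : ℕ
  n2 : ℕ

attribute [instance] Bdl.fV

def lt1 (b : Bdl) : b.V → b.V → Prop := fun u v => b.r1 u < b.r1 v
def lt2 (b : Bdl) : b.V → b.V → Prop := fun u v => b.r2 u < b.r2 v

/-- Invariants carried through the tower at level `k`. -/
structure Props (k : ℕ) (b : Bdl) : Prop where
  b1 : ∀ v, b.r1 v < b.n1
  b2 : ∀ v, b.r2 v < b.n2
  i1 : Function.Injective b.r1
  i2 : Function.Injective b.r2
  magic : IsMagical b.G (lt1 b) (lt2 b)
  cf : b.G.CliqueFree (k + 1)
  cl : ¬ b.G.CliqueFree k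
  col : b.G.Colorable (T k)
  lb : ∀ (α : Type) (C : b.G.Coloring α) (s : Finset α), (∀ v, C v ∈ s) → T k ≤ s.card
  ne : Nonempty b.V

/-! ### The base level (k = 1): a single vertex -/

def base : Bdl :=
  { V := PUnit, G := ⊥, r1 := fun _ => 0, r2 := fun _ => 0, n1 := 1, n2 := 1 }

lemma base_props : Props 1 base := by
  constructor
  · intro v; exact Nat.zero_lt_one
  · intro v; exact Nat.zero_lt_one
  · intro u v _; rfl
  · intro u v _; rfl
  · intro a x c _ _ h; exact absurd h (fun hh => hh)
  · intro s hs
    have h2 : 2 ≤ s.card := by rw [hs.2]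
    obtain ⟨u, hu, v, hv, huv⟩ := Finset.one_lt_card.mp h2
    exact absurd (hs.1 hu hv huv) (fun hh => hh)
  · intro h
    exact h {PUnit.unit} ⟨fun x _ y _ hxy => absurd (Subsingleton.elim (α := PUnit) x y) hxy, Finset.card_singleton _⟩
  · exact ⟨SimpleGraph.Coloring.mk (fun _ => (⟨0, T_pos (le_refl 1)⟩ : Fin (T 1)))
      (fun {u v} h => absurd h (fun hh => hh))⟩
  · intro α C s hmem
    have : 0 < s.card := Finset.card_pos.mpr ⟨C PUnit.unit, hmem _⟩
    simpa [T] using this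
  · exact ⟨PUnit.unit⟩

/-! ### The inductive step -/

section Step

variable (k : ℕ) (b : Bdl)

/-- Number of copies. -/
def M : ℕ := (k + 1) * T k * Nat.choose (T (k + 1)) (T k)

/-- Index data for one gadget instance. -/
abbrev Idx := (Fin (k + 1) × Fin (T k)) → (Fin (M k) × b.V)

noncomputable def enc : Idx k b → ℕ := fun f => ((Fintype.equivFin (Idx k b)) f).val

def NI : ℕ := Fintype.card (Idx k b)

/-- Vertex type of the next level. -/
abbrev Vt := (Fin (M k) × b.V) ⊕ (Idx k b × Fin (k + 1))

/-- A gadget instance is good when all chosen copies are distinct. -/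
def Good (f : Idx k b) : Prop := Function.Injective (fun p => (f p).1)

/-- Attachment relation: gadget vertex `(f, i)` is adjacent to vertex `u` in copy `P`
iff `u` lies in the `≤₁`-prefix of one of the representatives chosen for `i`. -/
def Att (f : Idx k b) (i : Fin (k + 1)) (P : Fin (M k)) (u : b.V) : Prop :=
  Good k b f ∧ ∃ j : Fin (T k), (f (i, j)).1 = P ∧ b.r1 u ≤ b.r1 (f (i, j)).2

def Adj : Vt k b → Vt k b → Prop
  | Sum.inl x, Sum.inl y => x.1 = y.1 ∧ b.G.Adj x.2 y.2
  | Sum.inl x, Sum.inr y => Att k b y.1 y.2 x.1 x.2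
  | Sum.inr y, Sum.inl x => Att k b y.1 y.2 x.1 x.2
  | Sum.inr y, Sum.inr z => y.1 = z.1 ∧ y.2 ≠ z.2

/-- The graph at the next level. -/
def Gr : SimpleGraph (Vt k b) where
  Adj := Adj k b
  symm := by
    constructor
    rintro (x | y) (x' | y') h
    · exact ⟨h.1.symm, h.2.symm⟩
    · exact h
    · exact h
    · exact ⟨h.1.symm, h.2.symm⟩
  loopless := by
    constructor
    rintro (x | y) h
    · exact b.G.loopless.irrefl _ h.2
    · exact h.2 rfl

noncomputable def R1 : Vt k b → ℕ
  | Sum.inl x => x.1.val * b.n1 + b.r1 x.2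
  | Sum.inr y => M k * b.n1 + (enc k b y.1 * (k + 1) + y.2.val)

noncomputable def R2 : Vt k b → ℕ
  | Sum.inl x => NI k b * (k + 1) + (x.1.val * b.n2 + b.r2 x.2)
  | Sum.inr y => enc k b y.1 * (k + 1) + y.2.val

noncomputable def step : Bdl :=
  { V := Vt k b, fV := by infer_instance, G := Gr k b, r1 := R1 k b, r2 := R2 k b,
    n1 := M k * b.n1 + NI k b * (k + 1), n2 := NI k b * (k + 1) + M k * b.n2 }

variable {k b}

lemma enc_lt (f : Idx k b) : enc k b f < NI k b := ((Fintype.equivFin (Idx k b)) f).isLt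

lemma enc_inj : Function.Injective (enc k b) := fun f g h =>
  (Fintype.equivFin (Idx k b)).injective (Fin.val_injective h)

lemma R1_inl_lt (hb1 : ∀ v, b.r1 v < b.n1) (x : Fin (M k) × b.V) :
    R1 k b (Sum.inl x) < M k * b.n1 := by
  have h1 := hb1 x.2
  have h2 : x.1.val + 1 ≤ M k := x.1.isLt
  calc x.1.val * b.n1 + b.r1 x.2 < x.1.val * b.n1 + b.n1 := by omega
    _ = (x.1.val + 1) * b.n1 := by ring
    _ ≤ M k * b.n1 := Nat.mul_le_mul_right _ h2

lemma MB_le_R1_inr (y : Idx k b × Fin (k + 1)) : M k * b.n1 ≤ R1 k b (Sum.inr y) :=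
  Nat.le_add_right _ _

lemma R2_inr_lt (y : Idx k b × Fin (k + 1)) : R2 k b (Sum.inr y) < NI k b * (k + 1) := by
  have h1 : y.2.val < k + 1 := y.2.isLt
  have h2 : enc k b y.1 + 1 ≤ NI k b := enc_lt y.1
  calc enc k b y.1 * (k + 1) + y.2.val < enc k b y.1 * (k + 1) + (k + 1) := by omega
    _ = (enc k b y.1 + 1) * (k + 1) := by ring
    _ ≤ NI k b * (k + 1) := Nat.mul_le_mul_right _ h2

lemma NIk_le_R2_inl (x : Fin (M k) × b.V) : NI k b * (k + 1) ≤ R2 k b (Sum.inl x) :=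
  Nat.le_add_right _ _

lemma step_b1 (hP : Props k b) : ∀ v, R1 k b v < M k * b.n1 + NI k b * (k + 1) := by
  rintro (x | y)
  · have := R1_inl_lt hP.b1 x
    omega
  · show M k * b.n1 + (enc k b y.1 * (k + 1) + y.2.val) < _
    have := R2_inr_lt y
    show _ < _
    have h : enc k b y.1 * (k + 1) + y.2.val < NI k b * (k + 1) := R2_inr_lt y
    omega

lemma step_b2 (hP : Props k b) : ∀ v, R2 k b v < NI k b * (k + 1) + M k * b.n2 := by
  rintro (x | y)
  · show NI k b * (k + 1) + (x.1.val * b.n2 + b.r2 x.2) < _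
    have h1 := hP.b2 x.2
    have h2 : x.1.val + 1 ≤ M k := x.1.isLt
    have h3 : x.1.val * b.n2 + b.r2 x.2 < M k * b.n2 := by
      calc x.1.val * b.n2 + b.r2 x.2 < x.1.val * b.n2 + b.n2 := by omega
        _ = (x.1.val + 1) * b.n2 := by ring
        _ ≤ M k * b.n2 := Nat.mul_le_mul_right _ h2
    omega
  · have := R2_inr_lt y
    omega

lemma step_i1 (hP : Props k b) : Function.Injective (R1 k b) := by
  rintro (x | y) (x' | y') h
  · have hx := hP.b1 x.2
    have hx' := hP.b1 x'.2
    obtain ⟨h1, h2⟩ := block_inj hx hx' h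
    have : x.1 = x'.1 := Fin.val_injective h1
    have : x.2 = x'.2 := hP.i1 h2
    exact Prod.ext ‹x.1 = x'.1› this ▸ by
      cases x; cases x'; simp_all
  · exfalso
    have h1 := R1_inl_lt hP.b1 x
    have h2 := MB_le_R1_inr (k := k) (b := b) y'
    omega
  · exfalso
    have h1 := R1_inl_lt hP.b1 x'
    have h2 := MB_le_R1_inr (k := k) (b := b) y
    omega
  · have h' : enc k b y.1 * (k + 1) + y.2.val = enc k b y'.1 * (k + 1) + y'.2.val := by
      have : M k * b.n1 + (enc k b y.1 * (k + 1) + y.2.val)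
          = M k * b.n1 + (enc k b y'.1 * (k + 1) + y'.2.val) := h
      omega
    obtain ⟨h1, h2⟩ := block_inj y.2.isLt y'.2.isLt h'
    have he : y.1 = y'.1 := enc_inj h1
    have hv : y.2 = y'.2 := Fin.val_injective h2
    cases y; cases y'; simp_all

lemma step_i2 (hP : Props k b) : Function.Injective (R2 k b) := by
  rintro (x | y) (x' | y') h
  · have h' : x.1.val * b.n2 + b.r2 x.2 = x'.1.val * b.n2 + b.r2 x'.2 := by
      have : NI k b * (k + 1) + (x.1.val * b.n2 + b.r2 x.2)
          = NI k b * (k + 1) + (x'.1.val * b.n2 + b.r2 x'.2) := h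
      omega
    obtain ⟨h1, h2⟩ := block_inj (hP.b2 x.2) (hP.b2 x'.2) h'
    have : x.1 = x'.1 := Fin.val_injective h1
    have : x.2 = x'.2 := hP.i2 h2
    cases x; cases x'; simp_all
  · exfalso
    have h1 := R2_inr_lt (k := k) (b := b) y'
    have h2 := NIk_le_R2_inl (k := k) (b := b) x
    omega
  · exfalso
    have h1 := R2_inr_lt (k := k) (b := b) y
    have h2 := NIk_le_R2_inl (k := k) (b := b) x'
    omega
  · obtain ⟨h1, h2⟩ := block_inj y.2.isLt y'.2.isLt h
    have he : y.1 = y'.1 := enc_inj h1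
    have hv : y.2 = y'.2 := Fin.val_injective h2
    cases y; cases y'; simp_all

/-! ### Magic -/

lemma step_magic (hP : Props k b) :
    IsMagical (Gr k b) (fun u v => R1 k b u < R1 k b v) (fun u v => R2 k b u < R2 k b v) := by
  rintro (⟨P, u⟩ | ⟨f, i⟩) (⟨Q, v⟩ | ⟨g, i₁⟩) (⟨R, w⟩ | ⟨h, i₂⟩) h1 h2 hax hxc hnac
  · -- inl inl inl : all inside one copy
    obtain ⟨hPQ, had1⟩ := hax
    obtain ⟨hQR, had2⟩ := hxc
    dsimp only at hPQ hQR
    subst hPQ; subst hQR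
    have l1 : b.r1 u < b.r1 v := by
      have : P.val * b.n1 + b.r1 u < P.val * b.n1 + b.r1 v := h1
      omega
    have l2 : b.r1 v < b.r1 w := by
      have : P.val * b.n1 + b.r1 v < P.val * b.n1 + b.r1 w := h2
      omega
    have hnadj : ¬ b.G.Adj u w := fun hh => hnac ⟨rfl, hh⟩
    obtain ⟨m1, m2⟩ := hP.magic u v w l1 l2 had1 had2 hnadj
    constructor
    · show NI k b * (k + 1) + (P.val * b.n2 + b.r2 v)
        < NI k b * (k + 1) + (P.val * b.n2 + b.r2 u)
      have : b.r2 v < b.r2 u := m1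
      omega
    · show NI k b * (k + 1) + (P.val * b.n2 + b.r2 v)
        < NI k b * (k + 1) + (P.val * b.n2 + b.r2 w)
      have : b.r2 v < b.r2 w := m2
      omega
  · -- inl inl inr : prefix-closure kills it
    exfalso
    obtain ⟨hPQ, had1⟩ := hax
    dsimp only at hPQ
    subst hPQ
    obtain ⟨hgood, j, hj1, hj2⟩ := hxc
    have l1 : b.r1 u < b.r1 v := by
      have : P.val * b.n1 + b.r1 u < P.val * b.n1 + b.r1 v := h1
      omega
    exact hnac ⟨hgood, j, hj1, le_trans (le_of_lt l1) hj2⟩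
  · -- inl inr inl : impossible by rank
    exfalso
    have ha := R1_inl_lt hP.b1 (R, w)
    have hb := MB_le_R1_inr (k := k) (b := b) (g, i₁)
    have : R1 k b (Sum.inr (g, i₁)) < R1 k b (Sum.inl (R, w)) := h2
    omega
  · -- inl inr inr
    obtain ⟨hgh, hne⟩ := hxc
    dsimp only at hgh
    subst hgh
    have hiv : i₁.val < i₂.val := by
      have : M k * b.n1 + (enc k b g * (k + 1) + i₁.val)
          < M k * b.n1 + (enc k b g * (k + 1) + i₂.val) := h2
      omega
    constructor
    · show R2 k b _ < R2 k b _
      have hx := R2_inr_lt (k := k) (b := b) (g, i₁)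
      have hy := NIk_le_R2_inl (k := k) (b := b) (P, u)
      show R2 k b (Sum.inr (g, i₁)) < R2 k b (Sum.inl (P, u))
      omega
    · show enc k b g * (k + 1) + i₁.val < enc k b g * (k + 1) + i₂.val
      omega
  · -- inr inl ...
    exfalso
    have ha := R1_inl_lt hP.b1 (Q, v)
    have hb := MB_le_R1_inr (k := k) (b := b) (f, i)
    have : R1 k b (Sum.inr (f, i)) < R1 k b (Sum.inl (Q, v)) := h1
    omega
  · exfalso
    have ha := R1_inl_lt hP.b1 (Q, v)
    have hb := MB_le_R1_inr (k := k) (b := b) (f, i)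
    have : R1 k b (Sum.inr (f, i)) < R1 k b (Sum.inl (Q, v)) := h1
    omega
  · -- inr inr inl : impossible by rank
    exfalso
    have ha := R1_inl_lt hP.b1 (R, w)
    have hb := MB_le_R1_inr (k := k) (b := b) (g, i₁)
    have : R1 k b (Sum.inr (g, i₁)) < R1 k b (Sum.inl (R, w)) := h2
    omega
  · -- inr inr inr
    exfalso
    obtain ⟨hfg, hne1⟩ := hax
    obtain ⟨hgh, hne2⟩ := hxc
    dsimp only at hfg hgh
    subst hfg; subst hgh
    by_cases hii : i = i₂
    · subst hii
      have e1 : R1 k b (Sum.inr (f, i)) < R1 k b (Sum.inr (f, i₁)) := h1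
      have e2 : R1 k b (Sum.inr (f, i₁)) < R1 k b (Sum.inr (f, i)) := h2
      omega
    · exact hnac ⟨rfl, hii⟩

/-! ### Clique structure -/

lemma Mpos (hk : 1 ≤ k) : 0 < M k := by
  have h1 : 0 < T k := T_pos hk
  have h2 : 0 < Nat.choose (T (k + 1)) (T k) := Nat.choose_pos (T_le_succ k)
  have h3 : 0 < k + 1 := Nat.succ_pos k
  exact Nat.mul_pos (Nat.mul_pos h3 h1) h2

lemma idx_nonempty (hk : 1 ≤ k) (hne : Nonempty b.V) : Nonempty (Idx k b) := by
  have : Nonempty (Fin (M k) × b.V) := ⟨⟨⟨0, Mpos hk⟩, Classical.arbitrary _⟩⟩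
  exact ⟨fun _ => Classical.arbitrary _⟩

lemma step_cf (hP : Props k b) : (Gr k b).CliqueFree (k + 2) := by
  classical
  intro s hs
  by_cases hg : ∃ y z : Idx k b × Fin (k + 1),
      Sum.inr y ∈ s ∧ Sum.inr z ∈ s ∧ y ≠ z
  · obtain ⟨y, z, hy, hz, hyz⟩ := hg
    have hadj : (Gr k b).Adj (Sum.inr y) (Sum.inr z) :=
      hs.1 hy hz (fun hh => hyz (Sum.inr_injective hh))
    obtain ⟨hf, hne⟩ := hadj
    have hall : ∀ v ∈ s, ∃ m : Fin (k + 1), v = Sum.inr (y.1, m) := by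
      intro v hv
      rcases v with x | w
      · exfalso
        have h1 : (Gr k b).Adj (Sum.inl x) (Sum.inr y) :=
          hs.1 hv hy (by simp)
        have h2 : (Gr k b).Adj (Sum.inl x) (Sum.inr z) :=
          hs.1 hv hz (by simp)
        obtain ⟨g1, j1, e1, _⟩ := h1
        obtain ⟨g2, j2, e2, _⟩ := h2
        rw [← hf] at e2
        have : (y.2, j1) = (z.2, j2) := g1 (e1.trans e2.symm)
        exact hne (congrArg Prod.fst this)
      · by_cases hvy : w = y
        · exact ⟨y.2, by rw [hvy]⟩
        · have hadj' : (Gr k b).Adj (Sum.inr w) (Sum.inr y) :=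
            hs.1 hv hy (fun hh => hvy (Sum.inr_injective hh))
          obtain ⟨hw1, _⟩ := hadj'
          exact ⟨w.2, congrArg Sum.inr (Prod.ext_iff.mpr ⟨hw1, rfl⟩)⟩
    have hsub : s ⊆ Finset.univ.image
        (fun m : Fin (k + 1) => (Sum.inr (y.1, m) : Vt k b)) := by
      intro v hv
      obtain ⟨m, rfl⟩ := hall v hv
      exact Finset.mem_image.mpr ⟨m, Finset.mem_univ _, rfl⟩
    have h1 := Finset.card_le_card hsub
    have h2 := Finset.card_image_le
      (f := fun m : Fin (k + 1) => (Sum.inr (y.1, m) : Vt k b)) (s := Finset.univ)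
    have h3 : (Finset.univ : Finset (Fin (k + 1))).card = k + 1 := by simp
    have h4 := hs.2
    omega
  · push_neg at hg
    set s' := s.filter (fun v : Vt k b => v.isLeft = true) with hs'def
    have hout : (s.filter (fun v : Vt k b => ¬ (v.isLeft = true))).card ≤ 1 := by
      by_contra hh
      push_neg at hh
      obtain ⟨a, ha, b', hb', hab⟩ := Finset.one_lt_card.mp hh
      rcases a with x | y
      · have := (Finset.mem_filter.mp ha).2; simp at this
      rcases b' with x | z
      · have := (Finset.mem_filter.mp hb').2; simp at this
      exact hab (by rw [hg y z (Finset.mem_filter.mp ha).1 (Finset.mem_filter.mp hb').1])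
    have hsplit := Finset.card_filter_add_card_filter_not
      (s := s) (p := fun v : Vt k b => v.isLeft = true)
    have hcard' : k + 1 ≤ s'.card := by
      have h4 := hs.2
      rw [hs'def]
      omega
    obtain ⟨v₀, hv₀⟩ : s'.Nonempty := Finset.card_pos.mp (by omega)
    have hv₀l := (Finset.mem_filter.mp hv₀).2
    rcases v₀ with x₀ | y₀
    swap
    · simp at hv₀l
    have hsame : ∀ v ∈ s', ∃ u : b.V, v = Sum.inl (x₀.1, u) := by
      intro v hv
      rcases v with x | y
      swap
      · have := (Finset.mem_filter.mp hv).2; simp at this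
      by_cases hvv : (Sum.inl x : Vt k b) = Sum.inl x₀
      · refine ⟨x₀.2, by rw [hvv]⟩
      · have hadj : (Gr k b).Adj (Sum.inl x) (Sum.inl x₀) :=
          hs.1 (Finset.mem_filter.mp hv).1 (Finset.mem_filter.mp hv₀).1 hvv
        obtain ⟨hcopy, _⟩ := hadj
        exact ⟨x.2, congrArg Sum.inl (Prod.ext_iff.mpr ⟨hcopy, rfl⟩)⟩
    have hVne : Nonempty b.V := hP.ne
    set prj : Vt k b → b.V := fun v => match v with
      | Sum.inl x => x.2
      | Sum.inr _ => x₀.2 with hprj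
    set t := s'.image prj with ht
    have hinj : Set.InjOn prj s' := by
      intro v hv w hw hvw
      obtain ⟨u, rfl⟩ := hsame v hv
      obtain ⟨u', rfl⟩ := hsame w hw
      simp only [hprj] at hvw
      rw [hvw]
    have hcardt : t.card = s'.card := Finset.card_image_of_injOn hinj
    have hcliq : b.G.IsClique t := by
      intro u hu u' hu' hne
      obtain ⟨v, hv, rfl⟩ := Finset.mem_image.mp hu
      obtain ⟨v', hv', rfl⟩ := Finset.mem_image.mp hu'
      obtain ⟨w₁, rfl⟩ := hsame v hv
      obtain ⟨w₂, rfl⟩ := hsame v' hv'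
      simp only [hprj] at hne ⊢
      have hadj : (Gr k b).Adj (Sum.inl (x₀.1, w₁)) (Sum.inl (x₀.1, w₂)) :=
        hs.1 (Finset.mem_filter.mp hv).1 (Finset.mem_filter.mp hv').1
          (by simpa using fun hh => hne hh)
      exact hadj.2
    obtain ⟨t', ht'sub, ht'card⟩ := Finset.exists_subset_card_eq
      (show k + 1 ≤ t.card by omega)
    exact hP.cf t' ⟨hcliq.subset ht'sub, ht'card⟩

lemma step_cl (hk : 1 ≤ k) (hP : Props k b) : ¬ (Gr k b).CliqueFree (k + 1) := by
  classical
  have hI : Nonempty (Idx k b) := idx_nonempty hk hP.ne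
  set f₀ : Idx k b := Classical.arbitrary _ with hf₀
  set X := Finset.univ.image (fun i : Fin (k + 1) => (Sum.inr (f₀, i) : Vt k b)) with hX
  intro h
  apply h X
  constructor
  · intro v hv w hw hvw
    obtain ⟨i, _, rfl⟩ := Finset.mem_image.mp hv
    obtain ⟨l, _, rfl⟩ := Finset.mem_image.mp hw
    exact ⟨rfl, fun he =>
      hvw (congrArg (fun m : Fin (k + 1) => (Sum.inr (f₀, m) : Vt k b)) he)⟩
  · rw [Finset.card_image_of_injective _ (fun i l hh => by
      have h2 := Sum.inr_injective hh
      exact (Prod.ext_iff.mp h2).2)]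
    simp

/-! ### Colorability (upper bound) -/

lemma step_col (hP : Props k b) : (Gr k b).Colorable (T (k + 1)) := by
  obtain ⟨C⟩ := hP.col
  have hle : T k ≤ T (k + 1) := T_le_succ k
  refine ⟨SimpleGraph.Coloring.mk
    (fun v => match v with
      | Sum.inl x => Fin.castLE hle (C x.2)
      | Sum.inr y => ⟨T k + y.2.val, by have := y.2.isLt; rw [T_succ]; omega⟩) ?_⟩
  rintro (x | y) (x' | y') hadj
  · intro hE
    exact C.valid hadj.2 (Fin.castLE_injective hle hE)
  · intro hE
    have h1 : ((Fin.castLE hle (C x.2)) : Fin (T (k + 1))).val < T k := (C x.2).isLt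
    have h2 := congrArg Fin.val hE
    simp at h2
    omega
  · intro hE
    have h1 : ((Fin.castLE hle (C x'.2)) : Fin (T (k + 1))).val < T k := (C x'.2).isLt
    have h2 := congrArg Fin.val hE
    simp at h2
    omega
  · intro hE
    have h2 := congrArg Fin.val hE
    simp at h2
    exact hadj.2 (Fin.val_injective h2)

/-! ### The chromatic lower bound -/

lemma step_lb (hk : 1 ≤ k) (hP : Props k b) :
    ∀ (α : Type) (C : (Gr k b).Coloring α) (s : Finset α),
      (∀ v, C v ∈ s) → T (k + 1) ≤ s.card := by
  classical
  intro α C s hsmem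
  by_contra hcon
  push_neg at hcon
  set c := T k with hc
  -- per-copy colorings
  let CP : Fin (M k) → b.G.Coloring α := fun P =>
    SimpleGraph.Coloring.mk (fun u => C (Sum.inl (P, u)))
      (fun {u v} h => C.valid (⟨rfl, h⟩ : (Gr k b).Adj (Sum.inl (P, u)) (Sum.inl (P, v))))
  let img : Fin (M k) → Finset α := fun P => Finset.univ.image (CP P)
  have himg_sub : ∀ P, img P ⊆ s := by
    intro P a ha
    obtain ⟨u, _, rfl⟩ := Finset.mem_image.mp ha
    exact hsmem _
  have himg_card : ∀ P, c ≤ (img P).card := fun P =>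
    hP.lb α (CP P) (img P) (fun u => Finset.mem_image_of_mem _ (Finset.mem_univ u))
  have hSP : ∀ P, ∃ SP : Finset α, SP ⊆ img P ∧ SP.card = c := fun P =>
    Finset.exists_subset_card_eq (himg_card P)
  choose SP hSPsub hSPcard using hSP
  have hmaps : ∀ P ∈ (Finset.univ : Finset (Fin (M k))), SP P ∈ s.powersetCard c := by
    intro P _
    rw [Finset.mem_powersetCard]
    exact ⟨(hSPsub P).trans (himg_sub P), hSPcard P⟩
  have hMpos := Mpos (k := k) hk
  have hne : (s.powersetCard c).Nonempty :=
    ⟨SP ⟨0, hMpos⟩, hmaps _ (Finset.mem_univ _)⟩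
  have hcount : (s.powersetCard c).card * ((k + 1) * c)
      ≤ (Finset.univ : Finset (Fin (M k))).card := by
    rw [Finset.card_powersetCard, Finset.card_univ, Fintype.card_fin]
    have h1 : s.card ≤ T (k + 1) := le_of_lt hcon
    have h2 : Nat.choose s.card c ≤ Nat.choose (T (k + 1)) c :=
      Nat.choose_le_choose c h1
    calc Nat.choose s.card c * ((k + 1) * c)
        ≤ Nat.choose (T (k + 1)) c * ((k + 1) * c) := Nat.mul_le_mul_right _ h2
      _ = (k + 1) * c * Nat.choose (T (k + 1)) c := by ring
      _ = M k := rfl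
  obtain ⟨S, hS, hfiber⟩ :=
    Finset.exists_le_card_fiber_of_mul_le_card_of_maps_to hmaps hne hcount
  have hScard : S.card = c := (Finset.mem_powersetCard.mp hS).2
  have hSsub : S ⊆ s := (Finset.mem_powersetCard.mp hS).1
  obtain ⟨F', hF'sub, hF'card⟩ := Finset.exists_subset_card_eq hfiber
  -- enumeration of chosen copies
  let eF := F'.equivFin
  let pe : Fin (k + 1) × Fin c ≃ Fin ((k + 1) * c) := finProdFinEquiv
  let ι : Fin (k + 1) × Fin c → Fin (M k) := fun p =>
    (eF.symm (Fin.cast hF'card.symm (pe p)) : F').val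
  have ιinj : Function.Injective ι := by
    intro p q h
    have h2 := eF.symm.injective (Subtype.coe_injective h)
    have h3 := congrArg Fin.val h2
    simp only [Fin.coe_cast] at h3
    exact pe.injective (Fin.val_injective h3)
  have hιS : ∀ p, SP (ι p) = S := by
    intro p
    have hm : ι p ∈ F' := (eF.symm (Fin.cast hF'card.symm (pe p))).2
    have hm2 := hF'sub hm
    exact (Finset.mem_filter.mp hm2).2
  -- color enumeration of S
  let eS := S.equivFin
  let sEnum : Fin c → α := fun j => (eS.symm (Fin.cast hScard.symm j) : S).val
  have hsEnum_mem : ∀ j, sEnum j ∈ S := fun j => (eS.symm _).2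
  have hsEnum_surj : ∀ a ∈ S, ∃ j, sEnum j = a := by
    intro a ha
    refine ⟨Fin.cast hScard (eS ⟨a, ha⟩), ?_⟩
    show ((eS.symm (Fin.cast hScard.symm (Fin.cast hScard (eS ⟨a, ha⟩)))) : S).val = a
    simp
  -- representatives
  have hrep : ∀ p : Fin (k + 1) × Fin c, ∃ u : b.V, CP (ι p) u = sEnum p.2 := by
    intro p
    have h1 : sEnum p.2 ∈ SP (ι p) := by rw [hιS]; exact hsEnum_mem _
    have h2 := hSPsub (ι p) h1
    obtain ⟨u, _, hu⟩ := Finset.mem_image.mp h2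
    exact ⟨u, hu⟩
  choose w hw using hrep
  -- the gadget instance
  let f : Idx k b := fun p => (ι p, w p)
  have hgood : Good k b f := fun p q h => ιinj h
  let x : Fin (k + 1) → Vt k b := fun i => Sum.inr (f, i)
  have hxadj : ∀ (i : Fin (k + 1)) (j : Fin c),
      (Gr k b).Adj (x i) (Sum.inl (ι (i, j), w (i, j))) := by
    intro i j
    exact ⟨hgood, j, rfl, le_refl _⟩
  have hxS : ∀ i, C (x i) ∉ S := by
    intro i hmem
    obtain ⟨j, hj⟩ := hsEnum_surj _ hmem
    have hval := C.valid (hxadj i j)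
    apply hval
    have : C (Sum.inl (ι (i, j), w (i, j))) = sEnum j := hw (i, j)
    rw [this, hj]
  have hxinj : Function.Injective (fun i : Fin (k + 1) => C (x i)) := by
    intro i l h
    by_contra hne
    exact C.valid (show (Gr k b).Adj (x i) (x l) from ⟨rfl, hne⟩) h
  set XC := Finset.univ.image (fun i : Fin (k + 1) => C (x i)) with hXC
  have hXCcard : XC.card = k + 1 := by
    rw [Finset.card_image_of_injective _ hxinj, Finset.card_univ, Fintype.card_fin]
  have hdisj : Disjoint S XC := by
    rw [Finset.disjoint_right]
    intro a haX haS
    obtain ⟨i, _, rfl⟩ := Finset.mem_image.mp haX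
    exact hxS i haS
  have hsub : S ∪ XC ⊆ s := by
    apply Finset.union_subset hSsub
    intro a ha
    obtain ⟨i, _, rfl⟩ := Finset.mem_image.mp ha
    exact hsmem _
  have hfin : c + (k + 1) ≤ s.card := by
    have h1 := Finset.card_le_card hsub
    rwa [Finset.card_union_of_disjoint hdisj, hScard, hXCcard] at h1
  have hT : T (k + 1) = c + (k + 1) := rfl
  omega

/-! ### Putting the step together -/

lemma step_props (hk : 1 ≤ k) (hP : Props k b) : Props (k + 1) (step k b) := by
  refine ⟨step_b1 hP, step_b2 hP, step_i1 hP, step_i2 hP, step_magic hP,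
    step_cf hP, step_cl hk hP, step_col hP, step_lb hk hP, ?_⟩
  have hI : Nonempty (Idx k b) := idx_nonempty hk hP.ne
  exact ⟨Sum.inr (Classical.arbitrary _, ⟨0, Nat.succ_pos k⟩)⟩

end Step

/-! ### The tower -/

noncomputable def Tw : ℕ → Bdl
  | 0 => base
  | n + 1 => step (n + 1) (Tw n)

lemma tw_props : ∀ n, Props (n + 1) (Tw n)
  | 0 => base_props
  | n + 1 => step_props (Nat.succ_le_succ (Nat.zero_le n)) (tw_props n)

end MagicalAux

/-- For every `k ≥ 2` there exists a magical double-ordered graph with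
clique number exactly `k` and chromatic number exactly `k(k+1)/2`. -/
theorem exists_magical_graph (k : ℕ) (hk : 2 ≤ k) :
    ∃ (V : Type) (_ : Fintype V) (G : SimpleGraph V) (lt1 lt2 : V → V → Prop),
      IsStrictTotalOrder V lt1 ∧ IsStrictTotalOrder V lt2 ∧
      IsMagical G lt1 lt2 ∧
      G.CliqueFree (k + 1) ∧ ¬ G.CliqueFree k ∧
      G.chromaticNumber = (k * (k + 1) / 2 : ℕ) := by
  classical
  obtain ⟨n, rfl⟩ : ∃ n, k = n + 1 := ⟨k - 1, by omega⟩
  set b := MagicalAux.Tw n with hb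
  have hP := MagicalAux.tw_props n
  refine ⟨b.V, inferInstance, b.G, MagicalAux.lt1 b, MagicalAux.lt2 b, ?_, ?_,
    hP.magic, hP.cf, hP.cl, ?_⟩
  · exact { trichotomous := fun u v hn1 hn2 => by
              rcases Nat.lt_trichotomy (b.r1 u) (b.r1 v) with h | h | h
              · exact absurd h hn1
              · exact hP.i1 h
              · exact absurd h hn2
            irrefl := fun u => Nat.lt_irrefl _
            trans := fun u v w h1 h2 => Nat.lt_trans h1 h2 }
  · exact { trichotomous := fun u v hn1 hn2 => by
              rcases Nat.lt_trichotomy (b.r2 u) (b.r2 v) with h | h | h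
              · exact absurd h hn1
              · exact hP.i2 h
              · exact absurd h hn2
            irrefl := fun u => Nat.lt_irrefl _
            trans := fun u v w h1 h2 => Nat.lt_trans h1 h2 }
  · have hupper : b.G.chromaticNumber ≤ (MagicalAux.T (n + 1) : ℕ∞) :=
      hP.col.chromaticNumber_le
    have hlower : (MagicalAux.T (n + 1) : ℕ∞) ≤ b.G.chromaticNumber := by
      rw [SimpleGraph.chromaticNumber_eq_biInf]
      refine le_iInf₂ fun m hm => ?_
      obtain ⟨Cm⟩ := hm
      have h1 := hP.lb (Fin m) Cm Finset.univ (fun v => Finset.mem_univ _)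
      have h2 : (Finset.univ : Finset (Fin m)).card = m := by simp
      exact_mod_cast (by omega : MagicalAux.T (n + 1) ≤ m)
    have hχ : b.G.chromaticNumber = (MagicalAux.T (n + 1) : ℕ∞) :=
      le_antisymm hupper hlower
    rw [hχ, MagicalAux.T_eq]
end

section
/- If G is a double-magical triple-ordered graph with clique number at most k, then χ(G) ≤ (k+1)/2 · C(k+2, 3) = k(k+1)²(k+2)/12. -/
/-!
For a relation `Q`, the `Q`-height of a vertex `v` is the size of the largest clique of `G` in
which every other vertex is `Q`-below `v`. Colour `v` by its heights for the four relations
`<₁ ∩ [<₂] ∩ [<₃]`, where each bracketed order may or may not be intersected. For an edge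
`v <₁ u`, intersect exactly those of `<₂, <₃` in which `v` is below `u`: magicality of `G¹` and
`G²` then makes every vertex of a clique below `v` adjacent to `u`, so the height of `u` is
strictly larger. The four heights `a ≤ b, c ≤ d` lie in `[1, k]`, and there are
`∑_{d ≤ k} ∑_{j < d} (j + 1)² = k(k+1)²(k+2)/12` such quadruples.
-/

open Finset SimpleGraph

namespace SimpleGraph

variable {V : Type*} {α : Type*}

theorem colorable_of_forall_mem {G : SimpleGraph V} (f : V → α) (S : Finset α)
    (hf : ∀ ⦃x y⦄, G.Adj x y → f x ≠ f y) (hS : ∀ v, f v ∈ S) : G.Colorable S.card := by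
  simpa using (Coloring.mk (fun v => (⟨f v, hS v⟩ : S))
    fun hxy h => hf hxy (congrArg Subtype.val h)).colorable

def IsMagical (G : SimpleGraph V) (r s : V → V → Prop) : Prop :=
  ∀ a b c, r a b → r b c → G.Adj a b → G.Adj b c → ¬ G.Adj a c → s b a ∧ s b c

theorem IsMagical.adj {G : SimpleGraph V} {r s : V → V → Prop} [Std.Asymm s]
    (hG : G.IsMagical r s) {a b c : V} (hab : r a b) (hbc : r b c) (ha : G.Adj a b)
    (hc : G.Adj b c) (hs : s b c → s a b) : G.Adj a c := by
  by_contra hac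
  obtain ⟨hba, hbc'⟩ := hG a b c hab hbc ha hc hac
  exact asymm (hs hbc') hba

section cliqueHeight

variable (G : SimpleGraph V) (Q : V → V → Prop)

def IsCliqueBelow (v : V) (s : Finset V) : Prop :=
  v ∈ s ∧ G.IsClique (s : Set V) ∧ ∀ w ∈ s, w ≠ v → Q w v

open Classical in
noncomputable def cliqueHeight [Fintype V] (v : V) : ℕ :=
  ((univ : Finset (Finset V)).filter (G.IsCliqueBelow Q v)).sup card

variable {G Q} {v : V} {s : Finset V}

theorem isCliqueBelow_singleton : G.IsCliqueBelow Q v {v} :=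
  ⟨mem_singleton_self v, by simp, by simp⟩

theorem IsCliqueBelow.insert [DecidableEq V] {u : V} (hs : G.IsCliqueBelow Q v s)
    (hvu : G.Adj v u) (hQvu : Q v u) (hQ : ∀ w, Q w v → Q w u)
    (hadj : ∀ w, Q w v → G.Adj w v → G.Adj w u) :
    u ∉ s ∧ G.IsCliqueBelow Q u (insert u s) := by
  obtain ⟨hv, hcl, hQs⟩ := hs
  have hadj_s : ∀ w ∈ s, w ≠ v → G.Adj w u := fun w hw hwv =>
    hadj w (hQs w hw hwv) (hcl hw hv hwv)
  refine ⟨fun hu => (hadj_s u hu hvu.ne').ne rfl, mem_insert_self u s, ?_, ?_⟩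
  · rw [coe_insert]
    refine hcl.insert fun w hw _ => ?_
    rcases eq_or_ne w v with rfl | hwv
    · exact hvu.symm
    · exact (hadj_s w hw hwv).symm
  · intro w hw hwu
    rcases mem_insert.1 hw with rfl | hw
    · exact absurd rfl hwu
    rcases eq_or_ne w v with rfl | hwv
    · exact hQvu
    · exact hQ w (hQs w hw hwv)

variable [Fintype V]

theorem IsCliqueBelow.card_le_cliqueHeight (hs : G.IsCliqueBelow Q v s) :
    s.card ≤ G.cliqueHeight Q v := by
  classical
  exact le_sup (f := card) (mem_filter.2 ⟨mem_univ s, hs⟩)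

theorem exists_isCliqueBelow_card_eq_cliqueHeight (G : SimpleGraph V) (Q : V → V → Prop)
    (v : V) : ∃ s, G.IsCliqueBelow Q v s ∧ s.card = G.cliqueHeight Q v := by
  classical
  obtain ⟨s, hs, hsup⟩ := exists_mem_eq_sup (univ.filter (G.IsCliqueBelow Q v))
    ⟨{v}, mem_filter.2 ⟨mem_univ _, isCliqueBelow_singleton⟩⟩ card
  exact ⟨s, (mem_filter.1 hs).2, hsup.symm⟩

theorem one_le_cliqueHeight : 1 ≤ G.cliqueHeight Q v := by
  simpa using (isCliqueBelow_singleton (G := G) (Q := Q) (v := v)).card_le_cliqueHeight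

theorem cliqueHeight_le_of_cliqueFree {k : ℕ} (hG : G.CliqueFree (k + 1)) :
    G.cliqueHeight Q v ≤ k := by
  obtain ⟨s, ⟨-, hcl, -⟩, hcard⟩ := exists_isCliqueBelow_card_eq_cliqueHeight G Q v
  by_contra! hk
  obtain ⟨t, hts, htcard⟩ := exists_subset_card_eq (n := k + 1) (hcard ▸ hk)
  exact hG t ⟨hcl.subset (coe_subset.2 hts), htcard⟩

theorem cliqueHeight_mono {Q' : V → V → Prop} (h : Q ≤ Q') :
    G.cliqueHeight Q v ≤ G.cliqueHeight Q' v := by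
  obtain ⟨s, ⟨hv, hcl, hQ⟩, hcard⟩ := exists_isCliqueBelow_card_eq_cliqueHeight G Q v
  exact hcard ▸ IsCliqueBelow.card_le_cliqueHeight
    ⟨hv, hcl, fun w hw hwv => h _ _ (hQ w hw hwv)⟩

theorem cliqueHeight_lt_of_adj {u : V} (hvu : G.Adj v u) (hQvu : Q v u)
    (hQ : ∀ w, Q w v → Q w u) (hadj : ∀ w, Q w v → G.Adj w v → G.Adj w u) :
    G.cliqueHeight Q v < G.cliqueHeight Q u := by
  classical
  obtain ⟨s, hs, hcard⟩ := exists_isCliqueBelow_card_eq_cliqueHeight G Q v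
  obtain ⟨hu, hs'⟩ := hs.insert hvu hQvu hQ hadj
  have := hs'.card_le_cliqueHeight
  rwa [card_insert_of_notMem hu, hcard] at this

end cliqueHeight

section refinedOrder

variable {lt1 lt2 lt3 : V → V → Prop}

def refinedOrder (lt1 lt2 lt3 : V → V → Prop) (b : Bool × Bool) (w x : V) : Prop :=
  lt1 w x ∧ (b.1 → lt2 w x) ∧ (b.2 → lt3 w x)

theorem refinedOrder_anti {b b' : Bool × Bool} (h : b ≤ b') :
    refinedOrder lt1 lt2 lt3 b' ≤ refinedOrder lt1 lt2 lt3 b :=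
  fun _ _ ⟨h1, h2, h3⟩ =>
    ⟨h1, fun hb => h2 (Bool.le_iff_imp.1 h.1 hb), fun hb => h3 (Bool.le_iff_imp.1 h.2 hb)⟩

theorem exists_cliqueHeight_lt_of_isMagical [Fintype V] [IsTrans V lt1] [IsTrans V lt2]
    [IsTrans V lt3] [Std.Asymm lt2] [Std.Asymm lt3] {G1 G2 : SimpleGraph V}
    (hmag1 : G1.IsMagical lt1 lt2) (hmag2 : G2.IsMagical lt1 lt3) {v u : V}
    (hvu : (G1 ⊓ G2).Adj v u) (h1 : lt1 v u) :
    ∃ b, (G1 ⊓ G2).cliqueHeight (refinedOrder lt1 lt2 lt3 b) v <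
      (G1 ⊓ G2).cliqueHeight (refinedOrder lt1 lt2 lt3 b) u := by
  classical
  refine ⟨(decide (lt2 v u), decide (lt3 v u)), cliqueHeight_lt_of_adj hvu
    ⟨h1, by simp, by simp⟩ ?_ ?_⟩
  · rintro w ⟨hw1, hw2, hw3⟩
    refine ⟨_root_.trans hw1 h1, fun hb => _root_.trans (hw2 hb) ?_,
      fun hb => _root_.trans (hw3 hb) ?_⟩ <;> simpa using hb
  · rintro w ⟨hw1, hw2, hw3⟩ ⟨hwv1, hwv2⟩
    exact ⟨hmag1.adj hw1 h1 hwv1 hvu.1 fun h => hw2 (by simpa using h),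
      hmag2.adj hw1 h1 hwv2 hvu.2 fun h => hw3 (by simpa using h)⟩

end refinedOrder

end SimpleGraph

theorem six_mul_sum_range_succ_sq (n : ℕ) :
    6 * ∑ j ∈ range n, (j + 1) ^ 2 = n * (n + 1) * (2 * n + 1) := by
  induction n with
  | zero => simp
  | succ n ih => rw [sum_range_succ, mul_add, ih]; ring

theorem twelve_mul_sum_range_sum_range_succ_sq (k : ℕ) :
    12 * ∑ n ∈ range k, ∑ j ∈ range (n + 1), (j + 1) ^ 2 = k * (k + 1) ^ 2 * (k + 2) := by
  induction k with
  | zero => simp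
  | succ k ih =>
    rw [sum_range_succ, mul_add, ih, show 12 = 2 * 6 by rfl, mul_assoc 2,
      six_mul_sum_range_succ_sq]
    ring

/-- The quadruples `1 ≤ a ≤ b, c ≤ d ≤ k`, listed by `d = n + 1` and the gap `j = d - a`. -/
def colorQuadruples (k : ℕ) : Finset (ℕ × ℕ × ℕ × ℕ) :=
  (range k).biUnion fun n => (range (n + 1)).biUnion fun j =>
    {n + 1 - j} ×ˢ Icc (n + 1 - j) (n + 1) ×ˢ Icc (n + 1 - j) (n + 1) ×ˢ {n + 1}

theorem mem_colorQuadruples {k a b c d : ℕ} (ha : 1 ≤ a) (hab : a ≤ b) (hac : a ≤ c)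
    (hbd : b ≤ d) (hcd : c ≤ d) (hdk : d ≤ k) : (a, b, c, d) ∈ colorQuadruples k := by
  simp only [colorQuadruples, mem_biUnion, mem_range, mem_product, mem_singleton, mem_Icc]
  exact ⟨d - 1, by omega, d - a, by omega, by omega⟩

theorem card_colorQuadruples_le (k : ℕ) :
    (colorQuadruples k).card ≤ k * (k + 1) ^ 2 * (k + 2) / 12 := by
  rw [← twelve_mul_sum_range_sum_range_succ_sq, Nat.mul_div_cancel_left _ (by norm_num)]
  refine card_biUnion_le.trans (sum_le_sum fun n _ => card_biUnion_le.trans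
    (sum_le_sum fun j hj => ?_))
  have : (Icc (n + 1 - j) (n + 1)).card = j + 1 := by
    rw [Nat.card_Icc]; have := mem_range.1 hj; omega
  simp [this, sq]

/-- A double-magical triple-ordered graph with clique number at most `k`
has chromatic number at most `(k+1)/2 · C(k+2,3) = k(k+1)²(k+2)/12`. -/
theorem doubleMagical_colorable {V : Type*} [Fintype V] (G G1 G2 : SimpleGraph V)
    (lt1 lt2 lt3 : V → V → Prop)
    [IsStrictTotalOrder V lt1] [IsStrictTotalOrder V lt2] [IsStrictTotalOrder V lt3]
    (hmag1 : ∀ a b c : V, lt1 a b → lt1 b c → G1.Adj a b → G1.Adj b c → ¬ G1.Adj a c →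
      lt2 b a ∧ lt2 b c)
    (hmag2 : ∀ a b c : V, lt1 a b → lt1 b c → G2.Adj a b → G2.Adj b c → ¬ G2.Adj a c →
      lt3 b a ∧ lt3 b c)
    (hE : ∀ u v : V, G.Adj u v ↔ G1.Adj u v ∧ G2.Adj u v)
    (k : ℕ) (hclique : G.CliqueFree (k + 1)) :
    G.Colorable (k * (k + 1) ^ 2 * (k + 2) / 12) := by
  obtain rfl : G = G1 ⊓ G2 := by ext; exact hE _ _
  let h (b : Bool × Bool) (v : V) := (G1 ⊓ G2).cliqueHeight (refinedOrder lt1 lt2 lt3 b) v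
  have hmem (v : V) : (h (true, true) v, h (true, false) v, h (false, true) v,
      h (false, false) v) ∈ colorQuadruples k :=
    mem_colorQuadruples one_le_cliqueHeight
      (cliqueHeight_mono (refinedOrder_anti (by decide)))
      (cliqueHeight_mono (refinedOrder_anti (by decide)))
      (cliqueHeight_mono (refinedOrder_anti (by decide)))
      (cliqueHeight_mono (refinedOrder_anti (by decide)))
      (cliqueHeight_le_of_cliqueFree hclique)
  refine (colorable_of_forall_mem _ _ ?_ hmem).mono (card_colorQuadruples_le k)
  intro x y hxy hxy_eq
  wlog h1 : lt1 x y generalizing x y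
  · rcases trichotomous_of lt1 x y with h | rfl | h
    · exact h1 h
    · exact hxy.ne rfl
    · exact this hxy.symm hxy_eq.symm h
  obtain ⟨b, hb⟩ := exists_cliqueHeight_lt_of_isMagical hmag1 hmag2 hxy h1
  simp only [h, Prod.mk.injEq] at hxy_eq
  rcases b with ⟨_ | _, _ | _⟩ <;> omega
end

section
/- Let v₁=(1,1,1), v₂=(1,−1,−1), v₃=(1,1,−1), v₄=(1,−1,1) in ℝ³ and for i ∈ [k]⁴ define P(i) = k³·i(1)·v₁ + k²·i(2)·v₂ + k·i(3)·v₃ + i(4)·v₄. Then for distinct i, i' ∈ [k]⁴, if r is the smallest index where they differ and i(r) > i'(r), the coordinatewise sign vector of P(i) − P(i') equals v_r. -/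
/-!
Writing `d = i - i'`, the `j`-th coordinate of `P(i) - P(i')` is `∑ₛ k^(3-s) dₛ (vₛ)ⱼ`, a base-`k`
expansion whose digits have absolute value at most `k - 1` and whose leading nonzero digit
`d_r (v_r)ⱼ` has absolute value at least `1`. The lower digits contribute at most `k^(3-r) - 1`,
so the leading term fixes the sign, and that sign is `(v_r)ⱼ = ±1`.
-/

section

variable {α : Type*} [CommRing α] [LinearOrder α] [IsStrictOrderedRing α]

theorem sign_add_eq_of_abs_lt {a b : α} (h : |b| < |a|) :
    SignType.sign (a + b) = SignType.sign a := by
  obtain ⟨hb₁, hb₂⟩ := abs_lt.mp h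
  rcases lt_trichotomy a 0 with ha | rfl | ha
  · rw [abs_of_neg ha] at hb₁ hb₂
    rw [sign_neg ha, sign_neg (by linarith)]
  · exact absurd h (by simp)
  · rw [abs_of_pos ha] at hb₁ hb₂
    rw [sign_pos ha, sign_pos (by linarith)]

theorem abs_sum_rev_pow_mul_le {k : α} (hk : 0 ≤ k) :
    ∀ {n : ℕ} (e : Fin n → α), (∀ s, |e s| ≤ k - 1) →
      |∑ s, k ^ (s.rev : ℕ) * e s| ≤ k ^ n - 1
  | 0, _, _ => by simp
  | n + 1, e, he => by
    rw [Fin.sum_univ_succ]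
    simp only [Fin.rev_zero, Fin.val_last, Fin.rev_succ, Fin.val_castSucc]
    have hlead : |k ^ n * e 0| ≤ k ^ n * (k - 1) := by
      rw [abs_mul, abs_of_nonneg (pow_nonneg hk n)]
      exact mul_le_mul_of_nonneg_left (he 0) (pow_nonneg hk n)
    have htail := abs_sum_rev_pow_mul_le hk (fun s => e s.succ) (fun s => he s.succ)
    calc _ ≤ |k ^ n * e 0| + |∑ s : Fin n, k ^ (s.rev : ℕ) * e s.succ| := abs_add_le _ _
      _ ≤ k ^ n * (k - 1) + (k ^ n - 1) := add_le_add hlead htail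
      _ = k ^ (n + 1) - 1 := by ring

theorem sign_sum_rev_pow_mul_eq {k : α} (hk : 0 < k) :
    ∀ {n : ℕ} (e : Fin n → α) (r : Fin n), (∀ s < r, e s = 0) → 1 ≤ |e r| →
      (∀ s, r < s → |e s| ≤ k - 1) →
      SignType.sign (∑ s, k ^ (s.rev : ℕ) * e s) = SignType.sign (e r)
  | n + 1, e, r, hpre, hr, htail => by
    rw [Fin.sum_univ_succ]
    simp only [Fin.rev_zero, Fin.val_last, Fin.rev_succ, Fin.val_castSucc]
    induction r using Fin.cases with
    | zero =>
      have hkn : 0 < k ^ n := pow_pos hk n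
      have hrest := abs_sum_rev_pow_mul_le hk.le (fun s => e s.succ)
        (fun s => htail s.succ (Fin.succ_pos s))
      rw [sign_add_eq_of_abs_lt, sign_mul, sign_pos hkn, one_mul]
      rw [abs_mul, abs_of_pos hkn]
      nlinarith
    | succ r =>
      rw [hpre 0 (Fin.succ_pos r), mul_zero, zero_add]
      exact sign_sum_rev_pow_mul_eq hk (fun s => e s.succ) r
        (fun s hs => hpre s.succ (Fin.succ_lt_succ_iff.mpr hs)) hr
        (fun s hs => htail s.succ (Fin.succ_lt_succ_iff.mpr hs))

end

theorem lex_property_general (k : ℕ)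
    (v : Fin 4 → Fin 3 → ℝ)
    (hv : v = ![![1, 1, 1], ![1, -1, -1], ![1, 1, -1], ![1, -1, 1]])
    (P : (Fin 4 → ℕ) → Fin 3 → ℝ)
    (hP : ∀ i j, P i j = (k : ℝ) ^ 3 * (i 0 : ℝ) * v 0 j + (k : ℝ) ^ 2 * (i 1 : ℝ) * v 1 j
      + (k : ℝ) * (i 2 : ℝ) * v 2 j + (i 3 : ℝ) * v 3 j)
    (sg : ℝ → ℝ)
    (hsg : ∀ x : ℝ, sg x = if 0 < x then 1 else if x < 0 then -1 else 0) :
    ∀ i i' : Fin 4 → ℕ,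
      (∀ j, 1 ≤ i j ∧ i j ≤ k) → (∀ j, 1 ≤ i' j ∧ i' j ≤ k) →
      ∀ r : Fin 4, i' r < i r → (∀ s : Fin 4, s < r → i s = i' s) →
      ∀ j : Fin 3, sg (P i j - P i' j) = v r j := by
  intro i i' hi hi' r hr hpre j
  have hsg_eq : ∀ x, sg x = SignType.sign x := fun x => by
    rw [hsg, sign_apply]; split_ifs <;> simp
  have hv_abs : ∀ s t, |v s t| = 1 := by
    subst hv; intro s t; fin_cases s <;> fin_cases t <;> simp
  have hdiff : P i j - P i' j = ∑ s, (k : ℝ) ^ (s.rev : ℕ) * (((i s : ℝ) - i' s) * v s j) := by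
    rw [Fin.sum_univ_four, hP, hP]
    change _ = (k : ℝ) ^ 3 * _ + (k : ℝ) ^ 2 * _ + (k : ℝ) ^ 1 * _ + (k : ℝ) ^ 0 * _
    ring
  have hdigit : ∀ s, |(i s : ℝ) - i' s| ≤ k - 1 := fun s => by
    obtain ⟨h₁, h₂⟩ := hi s
    obtain ⟨h₁', h₂'⟩ := hi' s
    rify at h₁ h₂ h₁' h₂'
    rw [abs_sub_le_iff]; constructor <;> linarith
  have hk : (0 : ℝ) < k := by have := hi 0; exact_mod_cast (by omega : 0 < k)
  have hlead : 1 ≤ (i r : ℝ) - i' r := by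
    have : (i' r : ℝ) + 1 ≤ i r := by exact_mod_cast hr
    linarith
  have hsign := sign_sum_rev_pow_mul_eq hk (fun s => ((i s : ℝ) - i' s) * v s j) r
    (fun s hs => by simp [hpre s hs])
    (by rw [abs_mul, hv_abs, mul_one, abs_of_pos (by linarith)]; exact hlead)
    (fun s _ => by rw [abs_mul, hv_abs, mul_one]; exact hdigit s)
  rw [hsg_eq, hdiff, hsign, sign_mul, sign_pos (by linarith), one_mul]
  simpa [hv_abs] using sign_mul_abs (v r j)

/-- The LEX property of the points `P(i)`. With
`v₁=(1,1,1), v₂=(1,−1,−1), v₃=(1,1,−1), v₄=(1,−1,1)` and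
`P(i) = k³ i(1) v₁ + k² i(2) v₂ + k i(3) v₃ + i(4) v₄`, for distinct `i, i' ∈ [k]⁴`,
if `r` is the smallest index where they differ and `i(r) > i'(r)`, then
`sg(P(i) − P(i')) = v_r`. -/
theorem lex_property (k : ℕ) (hk : 2 ≤ k)
    (v : Fin 4 → Fin 3 → ℝ)
    (hv : v = ![![1, 1, 1], ![1, -1, -1], ![1, 1, -1], ![1, -1, 1]])
    (P : (Fin 4 → ℕ) → Fin 3 → ℝ)
    (hP : ∀ i j, P i j = (k : ℝ) ^ 3 * (i 0 : ℝ) * v 0 j + (k : ℝ) ^ 2 * (i 1 : ℝ) * v 1 j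
      + (k : ℝ) * (i 2 : ℝ) * v 2 j + (i 3 : ℝ) * v 3 j)
    (sg : ℝ → ℝ)
    (hsg : ∀ x : ℝ, sg x = if 0 < x then 1 else if x < 0 then -1 else 0) :
    ∀ i i' : Fin 4 → ℕ,
      (∀ j, 1 ≤ i j ∧ i j ≤ k) → (∀ j, 1 ≤ i' j ∧ i' j ≤ k) →
      ∀ r : Fin 4, i' r < i r → (∀ s : Fin 4, s < r → i s = i' s) →
      ∀ j : Fin 3, sg (P i j - P i' j) = v r j :=
  lex_property_general k v hv P hP sg hsg
end

section
/- Let k ≥ 1, let S = {i ∈ [k]⁴ : i(1)+i(2) ≤ k+1, i(2) ≥ i(3), i(2) ≥ i(4)}, and let P : [k]⁴ → ℝ³ be defined via P(i) = k³·i(1)·(1,1,1) + k²·i(2)·(1,−1,−1) + k·i(3)·(1,1,−1) + i(4)·(1,−1,1). If H ⊆ S is such that {P(i) : i ∈ H} contains no hole, then |H| ≤ k. -/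
namespace NoHoleAux
variable (k : ℕ)

def EX (i : Fin 4 → ℕ) : ℕ := k^3 * i 0 + k^2 * i 1 + k * i 2 + i 3
def EY (i : Fin 4 → ℕ) : ℕ := k^3 * i 0 + k^2 * (k+1 - i 1) + k * i 2 + (k+1 - i 3)
def EZ (i : Fin 4 → ℕ) : ℕ := k^3 * i 0 + k^2 * (k+1 - i 1) + k * (k+1 - i 2) + i 3

def Bnd (i : Fin 4 → ℕ) : Prop := ∀ j, 1 ≤ i j ∧ i j ≤ k

lemma lex_lt {a b c d a' b' c' d' : ℕ}
    (hb : b ≤ k) (hc : c ≤ k) (hd : d ≤ k)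
    (hb' : 1 ≤ b') (hc' : 1 ≤ c') (hd' : 1 ≤ d')
    (h : a < a' ∨ (a = a' ∧ (b < b' ∨ (b = b' ∧ (c < c' ∨ (c = c' ∧ d < d')))))) :
    k^3*a + k^2*b + k*c + d < k^3*a' + k^2*b' + k*c' + d' := by
  obtain h | ⟨rfl, h⟩ := h
  · nlinarith [mul_le_mul_right h (k^3), mul_le_mul_right hb (k^2),
      mul_le_mul_right hc k, mul_le_mul_right hb' (k^2), mul_le_mul_right hc' k]
  obtain h | ⟨rfl, h⟩ := h
  · nlinarith [mul_le_mul_right h (k^2), mul_le_mul_right hc k, mul_le_mul_right hc' k]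
  obtain h | ⟨rfl, h⟩ := h
  · nlinarith [mul_le_mul_right h k]
  · omega

end NoHoleAux
namespace NoHoleAux
variable (k : ℕ)

lemma EX_lt {i j : Fin 4 → ℕ} (hi : Bnd k i) (hj : Bnd k j)
    (h : i 0 < j 0 ∨ (i 0 = j 0 ∧ (i 1 < j 1 ∨ (i 1 = j 1 ∧ (i 2 < j 2 ∨ (i 2 = j 2 ∧ i 3 < j 3)))))) :
    EX k i < EX k j := by
  have b1 := hi 1; have b2 := hi 2; have b3 := hi 3
  have c1 := hj 1; have c2 := hj 2; have c3 := hj 3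
  exact lex_lt k b1.2 b2.2 b3.2 c1.1 c2.1 c3.1 h

lemma EY_lt {i j : Fin 4 → ℕ} (hi : Bnd k i) (hj : Bnd k j)
    (h : i 0 < j 0 ∨ (i 0 = j 0 ∧ (j 1 < i 1 ∨ (i 1 = j 1 ∧ (i 2 < j 2 ∨ (i 2 = j 2 ∧ j 3 < i 3)))))) :
    EY k i < EY k j := by
  have b1 := hi 1; have b2 := hi 2; have b3 := hi 3
  have c1 := hj 1; have c2 := hj 2; have c3 := hj 3
  exact lex_lt k (by omega) b2.2 (by omega) (by omega) c2.1 (by omega) (by omega)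

lemma EZ_lt {i j : Fin 4 → ℕ} (hi : Bnd k i) (hj : Bnd k j)
    (h : i 0 < j 0 ∨ (i 0 = j 0 ∧ (j 1 < i 1 ∨ (i 1 = j 1 ∧ (j 2 < i 2 ∨ (i 2 = j 2 ∧ i 3 < j 3)))))) :
    EZ k i < EZ k j := by
  have b1 := hi 1; have b2 := hi 2; have b3 := hi 3
  have c1 := hj 1; have c2 := hj 2; have c3 := hj 3
  exact lex_lt k (by omega) (by omega) b3.2 (by omega) (by omega) c3.1 (by omega)

end NoHoleAux
namespace NoHoleAux
variable (k : ℕ)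

/-- X↑ Y↑ Z↑ forces first coordinate to increase. -/
lemma L1 {i j : Fin 4 → ℕ} (hi : Bnd k i) (hj : Bnd k j)
    (hX : EX k i < EX k j) (hY : EY k i < EY k j) (hZ : EZ k i < EZ k j) :
    i 0 < j 0 := by
  rcases lt_trichotomy (i 0) (j 0) with h0 | h0 | h0
  · exact h0
  · exfalso
    rcases lt_trichotomy (i 1) (j 1) with h1 | h1 | h1
    · have := EY_lt k hj hi (by omega); omega
    · rcases lt_trichotomy (i 2) (j 2) with h2 | h2 | h2
      · have := EZ_lt k hj hi (by omega); omega
      · rcases lt_trichotomy (i 3) (j 3) with h3 | h3 | h3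
        · have := EY_lt k hj hi (by omega); omega
        · simp [EX, h0, h1, h2, h3] at hX
        · have := EX_lt k hj hi (by omega); omega
      · have := EX_lt k hj hi (by omega); omega
    · have := EX_lt k hj hi (by omega); omega
  · exfalso; have := EX_lt k hj hi (by omega); omega

/-- X↑ Y↓ Z↑ : first three coordinates equal, fourth increases. -/
lemma L2 {i j : Fin 4 → ℕ} (hi : Bnd k i) (hj : Bnd k j)
    (hX : EX k i < EX k j) (hY : EY k j < EY k i) (hZ : EZ k i < EZ k j) :
    i 0 = j 0 ∧ i 1 = j 1 ∧ i 2 = j 2 ∧ i 3 < j 3 := by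
  have h0 : i 0 = j 0 := by
    rcases lt_trichotomy (i 0) (j 0) with h0 | h0 | h0
    · have := EY_lt k hi hj (by omega); omega
    · exact h0
    · have := EX_lt k hj hi (by omega); omega
  have h1 : i 1 = j 1 := by
    rcases lt_trichotomy (i 1) (j 1) with h1 | h1 | h1
    · have := EZ_lt k hj hi (by omega); omega
    · exact h1
    · have := EX_lt k hj hi (by omega); omega
  have h2 : i 2 = j 2 := by
    rcases lt_trichotomy (i 2) (j 2) with h2 | h2 | h2
    · have := EZ_lt k hj hi (by omega); omega
    · exact h2
    · have := EX_lt k hj hi (by omega); omega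
  have h3 : i 3 < j 3 := by
    rcases lt_trichotomy (i 3) (j 3) with h3 | h3 | h3
    · exact h3
    · exfalso; simp [EX, h0, h1, h2, h3] at hX
    · have := EX_lt k hj hi (by omega); omega
  exact ⟨h0, h1, h2, h3⟩

/-- X↑ Y↑ Z↓ : first two coordinates equal, third increases. -/
lemma L2' {i j : Fin 4 → ℕ} (hi : Bnd k i) (hj : Bnd k j)
    (hX : EX k i < EX k j) (hY : EY k i < EY k j) (hZ : EZ k j < EZ k i) :
    i 0 = j 0 ∧ i 1 = j 1 ∧ i 2 < j 2 := by
  have h0 : i 0 = j 0 := by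
    rcases lt_trichotomy (i 0) (j 0) with h0 | h0 | h0
    · have := EZ_lt k hi hj (by omega); omega
    · exact h0
    · have := EX_lt k hj hi (by omega); omega
  have h1 : i 1 = j 1 := by
    rcases lt_trichotomy (i 1) (j 1) with h1 | h1 | h1
    · have := EY_lt k hj hi (by omega); omega
    · exact h1
    · have := EX_lt k hj hi (by omega); omega
  have h2 : i 2 < j 2 := by
    rcases lt_trichotomy (i 2) (j 2) with h2 | h2 | h2
    · exact h2
    · exfalso
      rcases lt_trichotomy (i 3) (j 3) with h3 | h3 | h3
      · have := EY_lt k hj hi (by omega); omega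
      · simp [EX, h0, h1, h2, h3] at hX
      · have := EX_lt k hj hi (by omega); omega
    · have := EX_lt k hj hi (by omega); omega
  exact ⟨h0, h1, h2⟩

/-- X↑ Y↓ Z↓ : first coordinate equal, second increases. -/
lemma L3 {i j : Fin 4 → ℕ} (hi : Bnd k i) (hj : Bnd k j)
    (hX : EX k i < EX k j) (hY : EY k j < EY k i) (hZ : EZ k j < EZ k i) :
    i 0 = j 0 ∧ i 1 < j 1 := by
  have h0 : i 0 = j 0 := by
    rcases lt_trichotomy (i 0) (j 0) with h0 | h0 | h0
    · have := EY_lt k hi hj (by omega); omega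
    · exact h0
    · have := EX_lt k hj hi (by omega); omega
  have h1 : i 1 < j 1 := by
    rcases lt_trichotomy (i 1) (j 1) with h1 | h1 | h1
    · exact h1
    · exfalso
      rcases lt_trichotomy (i 2) (j 2) with h2 | h2 | h2
      · have := EY_lt k hi hj (by omega); omega
      · rcases lt_trichotomy (i 3) (j 3) with h3 | h3 | h3
        · have := EZ_lt k hi hj (by omega); omega
        · simp [EX, h0, h1, h2, h3] at hX
        · have := EX_lt k hj hi (by omega); omega
      · have := EX_lt k hj hi (by omega); omega
    · have := EX_lt k hj hi (by omega); omega
  exact ⟨h0, h1⟩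

end NoHoleAux
namespace NoHoleAux
variable (k : ℕ)

lemma eq_of_fin4 {i j : Fin 4 → ℕ} (h0 : i 0 = j 0) (h1 : i 1 = j 1)
    (h2 : i 2 = j 2) (h3 : i 3 = j 3) : i = j := by
  funext t; fin_cases t <;> assumption

lemma EX_inj {i j : Fin 4 → ℕ} (hi : Bnd k i) (hj : Bnd k j)
    (h : EX k i = EX k j) : i = j := by
  have h0 : i 0 = j 0 := by
    rcases lt_trichotomy (i 0) (j 0) with h' | h' | h'
    · have := EX_lt k hi hj (by omega); omega
    · exact h'
    · have := EX_lt k hj hi (by omega); omega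
  have h1 : i 1 = j 1 := by
    rcases lt_trichotomy (i 1) (j 1) with h' | h' | h'
    · have := EX_lt k hi hj (by omega); omega
    · exact h'
    · have := EX_lt k hj hi (by omega); omega
  have h2 : i 2 = j 2 := by
    rcases lt_trichotomy (i 2) (j 2) with h' | h' | h'
    · have := EX_lt k hi hj (by omega); omega
    · exact h'
    · have := EX_lt k hj hi (by omega); omega
  have h3 : i 3 = j 3 := by
    rcases lt_trichotomy (i 3) (j 3) with h' | h' | h'
    · have := EX_lt k hi hj (by omega); omega
    · exact h'
    · have := EX_lt k hj hi (by omega); omega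
  exact eq_of_fin4 h0 h1 h2 h3

lemma EY_inj {i j : Fin 4 → ℕ} (hi : Bnd k i) (hj : Bnd k j)
    (h : EY k i = EY k j) : i = j := by
  have h0 : i 0 = j 0 := by
    rcases lt_trichotomy (i 0) (j 0) with h' | h' | h'
    · have := EY_lt k hi hj (by omega); omega
    · exact h'
    · have := EY_lt k hj hi (by omega); omega
  have h1 : i 1 = j 1 := by
    rcases lt_trichotomy (i 1) (j 1) with h' | h' | h'
    · have := EY_lt k hj hi (by omega); omega
    · exact h'
    · have := EY_lt k hi hj (by omega); omega
  have h2 : i 2 = j 2 := by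
    rcases lt_trichotomy (i 2) (j 2) with h' | h' | h'
    · have := EY_lt k hi hj (by omega); omega
    · exact h'
    · have := EY_lt k hj hi (by omega); omega
  have h3 : i 3 = j 3 := by
    rcases lt_trichotomy (i 3) (j 3) with h' | h' | h'
    · have := EY_lt k hj hi (by omega); omega
    · exact h'
    · have := EY_lt k hi hj (by omega); omega
  exact eq_of_fin4 h0 h1 h2 h3

lemma EZ_inj {i j : Fin 4 → ℕ} (hi : Bnd k i) (hj : Bnd k j)
    (h : EZ k i = EZ k j) : i = j := by
  have h0 : i 0 = j 0 := by
    rcases lt_trichotomy (i 0) (j 0) with h' | h' | h'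
    · have := EZ_lt k hi hj (by omega); omega
    · exact h'
    · have := EZ_lt k hj hi (by omega); omega
  have h1 : i 1 = j 1 := by
    rcases lt_trichotomy (i 1) (j 1) with h' | h' | h'
    · have := EZ_lt k hj hi (by omega); omega
    · exact h'
    · have := EZ_lt k hi hj (by omega); omega
  have h2 : i 2 = j 2 := by
    rcases lt_trichotomy (i 2) (j 2) with h' | h' | h'
    · have := EZ_lt k hj hi (by omega); omega
    · exact h'
    · have := EZ_lt k hi hj (by omega); omega
  have h3 : i 3 = j 3 := by
    rcases lt_trichotomy (i 3) (j 3) with h' | h' | h'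
    · have := EZ_lt k hi hj (by omega); omega
    · exact h'
    · have := EZ_lt k hj hi (by omega); omega
  exact eq_of_fin4 h0 h1 h2 h3

lemma chain_lt (f : ℕ → ℕ) {s e : ℕ} (hse : s ≤ e)
    (h : ∀ t, s ≤ t → t < e → f t < f (t+1)) : f s + (e - s) ≤ f e := by
  induction e, hse using Nat.le_induction with
  | base => omega
  | succ e hse ih =>
    have h1 := h e hse (by omega)
    have h2 := ih (fun t ht ht' => h t ht (by omega))
    omega

lemma chain_eq (f : ℕ → ℕ) {s e : ℕ} (hse : s ≤ e)
    (h : ∀ t, s ≤ t → t < e → f (t+1) = f t) : f e = f s := by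
  induction e, hse using Nat.le_induction with
  | base => rfl
  | succ e hse ih =>
    have h1 := h e hse (by omega)
    have h2 := ih (fun t ht ht' => h t ht (by omega))
    omega

lemma count_main {k m p q : ℕ} (A B C : ℕ → ℕ)
    (hpq : p ≤ q) (hq : q < m)
    (hA1 : 1 ≤ A 0)
    (h1 : ∀ t, t + 1 ≤ p → A t < A (t+1))
    (h2 : ∀ t, p ≤ t → t + 1 ≤ q → A (t+1) = A t ∧ B (t+1) = B t ∧ C t < C (t+1))
    (h3 : ∀ t, q ≤ t → t + 1 < m → A (t+1) = A t ∧ B t < B (t+1))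
    (hCp : 1 ≤ C p) (hCB : C q ≤ B q) (hAB : A (m-1) + B (m-1) ≤ k + 1) :
    m ≤ k := by
  have c1 : A 0 + p ≤ A p := chain_lt A (Nat.zero_le p) (fun t ht ht' => h1 t (by omega))
  have cA2 : A q = A p := chain_eq A hpq (fun t ht ht' => (h2 t ht (by omega)).1)
  have cC : C p + (q - p) ≤ C q := chain_lt C hpq (fun t ht ht' => (h2 t ht (by omega)).2.2)
  have cB : B q + (m-1-q) ≤ B (m-1) :=
    chain_lt B (by omega) (fun t ht ht' => (h3 t ht (by omega)).2)
  have cA3 : A (m-1) = A q := chain_eq A (by omega) (fun t ht ht' => (h3 t ht (by omega)).1)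
  omega

end NoHoleAux


/-- An ordered triple of points in ℝ³ is a hole if `u(1) < v(1) < w(1)` and either
`v(2) < min{u(2), w(2)}` or `v(3) < min{u(3), w(3)}`. -/
def IsHole (u v w : Fin 3 → ℝ) : Prop :=
  u 0 < v 0 ∧ v 0 < w 0 ∧ (v 1 < min (u 1) (w 1) ∨ v 2 < min (u 2) (w 2))

open NoHoleAux

/-- If `H ⊆ S = {i ∈ [k]⁴ : i(1)+i(2) ≤ k+1, i(2) ≥ i(3), i(2) ≥ i(4)}`
is such that `{P(i) : i ∈ H}` contains no hole, then `|H| ≤ k`. -/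
theorem no_hole_card_le (k : ℕ) (hk : 1 ≤ k)
    (P : (Fin 4 → ℕ) → Fin 3 → ℝ)
    (hP : ∀ i j, P i j
      = (k : ℝ) ^ 3 * (i 0 : ℝ) * (![1, 1, 1] : Fin 3 → ℝ) j
      + (k : ℝ) ^ 2 * (i 1 : ℝ) * (![1, -1, -1] : Fin 3 → ℝ) j
      + (k : ℝ) * (i 2 : ℝ) * (![1, 1, -1] : Fin 3 → ℝ) j
      + (i 3 : ℝ) * (![1, -1, 1] : Fin 3 → ℝ) j)
    (H : Finset (Fin 4 → ℕ))
    (hHS : ∀ i ∈ H, (∀ j, 1 ≤ i j ∧ i j ≤ k) ∧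
      i 0 + i 1 ≤ k + 1 ∧ i 2 ≤ i 1 ∧ i 3 ≤ i 1)
    (hnohole : ∀ a ∈ H, ∀ b ∈ H, ∀ c ∈ H, ¬ IsHole (P a) (P b) (P c)) :
    H.card ≤ k := by
  classical
  rcases Nat.eq_zero_or_pos H.card with h0 | hm1
  · omega
  set m := H.card with hm
  have hB : ∀ i ∈ H, Bnd k i := fun i hi => (hHS i hi).1
  -- coordinates of P in terms of the natural-number encodings
  have hP0 : ∀ i, Bnd k i → P i 0 = (EX k i : ℝ) := by
    intro i hbi
    rw [hP]; simp [EX]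
  have hP1 : ∀ i, Bnd k i → P i 1 = (EY k i : ℝ) - ((k:ℝ)^2+1)*((k:ℝ)+1) := by
    intro i hbi
    have e1 : i 1 ≤ k + 1 := by have := (hbi 1).2; omega
    have e3 : i 3 ≤ k + 1 := by have := (hbi 3).2; omega
    rw [hP]; simp [EY]
    push_cast [Nat.cast_sub e1, Nat.cast_sub e3]; ring
  have hP2 : ∀ i, Bnd k i → P i 2 = (EZ k i : ℝ) - ((k:ℝ)^2+(k:ℝ))*((k:ℝ)+1) := by
    intro i hbi
    have e1 : i 1 ≤ k + 1 := by have := (hbi 1).2; omega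
    have e2 : i 2 ≤ k + 1 := by have := (hbi 2).2; omega
    rw [hP]; simp [EZ]
    push_cast [Nat.cast_sub e1, Nat.cast_sub e2]; ring
  -- sort H by EX
  have hinj : Set.InjOn (EX k) H := fun i hi j hj h => EX_inj k (hB i hi) (hB j hj) h
  set T := H.image (EX k) with hTdef
  have hT : T.card = m := Finset.card_image_of_injOn hinj
  have hex : ∀ t : Fin m, ∃ x, x ∈ H ∧ EX k x = T.orderEmbOfFin hT t := by
    intro t
    have h1 := T.orderEmbOfFin_mem hT t
    obtain ⟨x, hx, hx'⟩ := Finset.mem_image.mp h1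
    exact ⟨x, hx, hx'⟩
  choose g hgH hgEX using hex
  set G : ℕ → (Fin 4 → ℕ) := fun n => if h : n < m then g ⟨n, h⟩ else g ⟨0, hm1⟩ with hGdef
  have hGH : ∀ n, n < m → G n ∈ H := by
    intro n h; simp only [hGdef, dif_pos h]; exact hgH _
  have hGB : ∀ n, n < m → Bnd k (G n) := fun n h => hB _ (hGH n h)
  have hGX : ∀ r s, r < s → s < m → EX k (G r) < EX k (G s) := by
    intro r s hrs hs
    have hr : r < m := lt_trans hrs hs
    simp only [hGdef, dif_pos hr, dif_pos hs]
    rw [hgEX, hgEX]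
    exact (T.orderEmbOfFin hT).strictMono (Fin.mk_lt_mk.mpr hrs)
  have hGne : ∀ r s, r < s → s < m → G r ≠ G s := by
    intro r s hrs hs e
    have := hGX r s hrs hs; rw [e] at this; omega
  have hX01 : ∀ r s, r < s → s < m → P (G r) 0 < P (G s) 0 := by
    intro r s hrs hs
    rw [hP0 _ (hGB r (lt_trans hrs hs)), hP0 _ (hGB s hs)]
    exact_mod_cast hGX r s hrs hs
  -- no valleys in Y and Z
  have noY : ∀ r s t, r < s → s < t → t < m →
      ¬(EY k (G s) < EY k (G r) ∧ EY k (G s) < EY k (G t)) := by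
    intro r s t h1 h2 h3 ⟨hy1, hy2⟩
    have hrm : r < m := by omega
    have hsm : s < m := by omega
    refine hnohole (G r) (hGH r hrm) (G s) (hGH s hsm) (G t) (hGH t h3) ?_
    refine ⟨hX01 r s h1 hsm, hX01 s t h2 h3, Or.inl ?_⟩
    rw [hP1 _ (hGB r hrm), hP1 _ (hGB s hsm), hP1 _ (hGB t h3), lt_min_iff]
    constructor
    · exact sub_lt_sub_right (by exact_mod_cast hy1) _
    · exact sub_lt_sub_right (by exact_mod_cast hy2) _
  have noZ : ∀ r s t, r < s → s < t → t < m →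
      ¬(EZ k (G s) < EZ k (G r) ∧ EZ k (G s) < EZ k (G t)) := by
    intro r s t h1 h2 h3 ⟨hz1, hz2⟩
    have hrm : r < m := by omega
    have hsm : s < m := by omega
    refine hnohole (G r) (hGH r hrm) (G s) (hGH s hsm) (G t) (hGH t h3) ?_
    refine ⟨hX01 r s h1 hsm, hX01 s t h2 h3, Or.inr ?_⟩
    rw [hP2 _ (hGB r hrm), hP2 _ (hGB s hsm), hP2 _ (hGB t h3), lt_min_iff]
    constructor
    · exact sub_lt_sub_right (by exact_mod_cast hz1) _
    · exact sub_lt_sub_right (by exact_mod_cast hz2) _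
  have hYne : ∀ r s, r < s → s < m → EY k (G r) ≠ EY k (G s) := by
    intro r s hrs hs e
    exact hGne r s hrs hs (EY_inj k (hGB r (lt_trans hrs hs)) (hGB s hs) e)
  have hZne : ∀ r s, r < s → s < m → EZ k (G r) ≠ EZ k (G s) := by
    intro r s hrs hs e
    exact hGne r s hrs hs (EZ_inj k (hGB r (lt_trans hrs hs)) (hGB s hs) e)
  -- peaks
  obtain ⟨p, hpmem, hpmax⟩ := Finset.exists_max_image (Finset.range m)
    (fun n => EY k (G n)) ⟨0, Finset.mem_range.mpr hm1⟩
  rw [Finset.mem_range] at hpmem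
  obtain ⟨q, hqmem, hqmax⟩ := Finset.exists_max_image (Finset.range m)
    (fun n => EZ k (G n)) ⟨0, Finset.mem_range.mpr hm1⟩
  rw [Finset.mem_range] at hqmem
  have Yinc : ∀ r s, r < s → s ≤ p → EY k (G r) < EY k (G s) := by
    intro r s hrs hsp
    have hsm : s < m := by omega
    have hne := hYne r s hrs hsm
    by_contra hcon
    have h' : EY k (G s) < EY k (G r) := by omega
    rcases eq_or_lt_of_le hsp with rfl | hsp'
    · have := hpmax r (Finset.mem_range.mpr (by omega)); omega
    · have hne2 := hYne s p hsp' hpmem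
      have hle := hpmax s (Finset.mem_range.mpr hsm)
      exact noY r s p hrs hsp' hpmem ⟨h', by omega⟩
  have Ydec : ∀ s t, p ≤ s → s < t → t < m → EY k (G t) < EY k (G s) := by
    intro s t hps hst htm
    have hsm : s < m := by omega
    have hne := hYne s t hst htm
    by_contra hcon
    have h' : EY k (G s) < EY k (G t) := by omega
    rcases eq_or_lt_of_le hps with rfl | hps'
    · have := hpmax t (Finset.mem_range.mpr htm); omega
    · have hne2 := hYne p s hps' hsm
      have hle := hpmax s (Finset.mem_range.mpr hsm)
      exact noY p s t hps' hst htm ⟨by omega, h'⟩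
  have Zinc : ∀ r s, r < s → s ≤ q → EZ k (G r) < EZ k (G s) := by
    intro r s hrs hsq
    have hsm : s < m := by omega
    have hne := hZne r s hrs hsm
    by_contra hcon
    have h' : EZ k (G s) < EZ k (G r) := by omega
    rcases eq_or_lt_of_le hsq with rfl | hsq'
    · have := hqmax r (Finset.mem_range.mpr (by omega)); omega
    · have hne2 := hZne s q hsq' hqmem
      have hle := hqmax s (Finset.mem_range.mpr hsm)
      exact noZ r s q hrs hsq' hqmem ⟨h', by omega⟩
  have Zdec : ∀ s t, q ≤ s → s < t → t < m → EZ k (G t) < EZ k (G s) := by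
    intro s t hqs hst htm
    have hsm : s < m := by omega
    have hne := hZne s t hst htm
    by_contra hcon
    have h' : EZ k (G s) < EZ k (G t) := by omega
    rcases eq_or_lt_of_le hqs with rfl | hqs'
    · have := hqmax t (Finset.mem_range.mpr htm); omega
    · have hne2 := hZne q s hqs' hsm
      have hle := hqmax s (Finset.mem_range.mpr hsm)
      exact noZ q s t hqs' hst htm ⟨by omega, h'⟩
  have hABf : ∀ n, n < m → G n 0 + G n 1 ≤ k + 1 := fun n h => (hHS _ (hGH n h)).2.1
  rcases le_or_gt p q with hpq | hqp
  · refine count_main (k := k) (m := m) (p := p) (q := q)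
      (fun n => G n 0) (fun n => G n 1) (fun n => G n 3) hpq hqmem
      ((hGB 0 hm1 0).1) ?_ ?_ ?_ ((hGB p hpmem 3).1)
      ((hHS _ (hGH q hqmem)).2.2.2) (hABf (m-1) (by omega))
    · intro t ht
      exact L1 k (hGB t (by omega)) (hGB (t+1) (by omega))
        (hGX t (t+1) (by omega) (by omega)) (Yinc t (t+1) (by omega) ht)
        (Zinc t (t+1) (by omega) (by omega))
    · intro t hpt htq
      have := L2 k (hGB t (by omega)) (hGB (t+1) (by omega))
        (hGX t (t+1) (by omega) (by omega)) (Ydec t (t+1) hpt (by omega) (by omega))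
        (Zinc t (t+1) (by omega) htq)
      exact ⟨this.1.symm, this.2.1.symm, this.2.2.2⟩
    · intro t hqt htm
      have := L3 k (hGB t (by omega)) (hGB (t+1) (by omega))
        (hGX t (t+1) (by omega) (by omega)) (Ydec t (t+1) (by omega) (by omega) (by omega))
        (Zdec t (t+1) hqt (by omega) (by omega))
      exact ⟨this.1.symm, this.2⟩
  · refine count_main (k := k) (m := m) (p := q) (q := p)
      (fun n => G n 0) (fun n => G n 1) (fun n => G n 2) (le_of_lt hqp) hpmem
      ((hGB 0 hm1 0).1) ?_ ?_ ?_ ((hGB q hqmem 2).1)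
      ((hHS _ (hGH p hpmem)).2.2.1) (hABf (m-1) (by omega))
    · intro t ht
      exact L1 k (hGB t (by omega)) (hGB (t+1) (by omega))
        (hGX t (t+1) (by omega) (by omega)) (Yinc t (t+1) (by omega) (by omega))
        (Zinc t (t+1) (by omega) ht)
    · intro t hqt htp
      have := L2' k (hGB t (by omega)) (hGB (t+1) (by omega))
        (hGX t (t+1) (by omega) (by omega)) (Yinc t (t+1) (by omega) htp)
        (Zdec t (t+1) hqt (by omega) (by omega))
      exact ⟨this.1.symm, this.2.1.symm, this.2.2⟩
    · intro t hpt htm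
      have := L3 k (hGB t (by omega)) (hGB (t+1) (by omega))
        (hGX t (t+1) (by omega) (by omega)) (Ydec t (t+1) hpt (by omega) (by omega))
        (Zdec t (t+1) (by omega) (by omega) (by omega))
      exact ⟨this.1.symm, this.2⟩
end
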